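/- arXiv:1210.7470 — 6 statements merged into one kernel-verified Lean document; each statement's English description precedes it below -/
import Mathlib

section
/- Let r ≥ 4, let X = {2, 4, r+2}, and let 𝒜 = F(r,n,{{2,3}}). If 2r ≤ n < (3r + 1 + √(5r² − 22r + 25))/2, then |𝒜(X)| > |𝒮_{n,r}(X)|. -/
open Finset

/-- The `i`-th smallest element of a finite set of naturals (1-indexed);
    `0` if out of range. -/
def nthEl (A : Finset ℕ) (i : ℕ) : ℕ := (A.sort (· ≤ ·)).getD (i - 1) 0

/-- `A ≺ C` : `C = {c_1 < ⋯ < c_k}` with `k ≤ |A|` and `a_i ≤ c_i` for `1 ≤ i ≤ k`. -/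
def SetPrec (A C : Finset ℕ) : Prop :=
  C.card ≤ A.card ∧ ∀ i ∈ Finset.Icc 1 C.card, nthEl A i ≤ nthEl C i

instance (A C : Finset ℕ) : Decidable (SetPrec A C) := by
  unfold SetPrec; infer_instance

/-- The compression order: `A ≤ B` for sets of the same size, `a_i ≤ b_i` for all `i`. -/
def SetLE (A B : Finset ℕ) : Prop :=
  A.card = B.card ∧ ∀ i ∈ Finset.Icc 1 A.card, nthEl A i ≤ nthEl B i

instance (A B : Finset ℕ) : Decidable (SetLE A B) := by
  unfold SetLE; infer_instance

/-- `Binom([n], r)`: the family of `r`-element subsets of `[n] = {1, …, n}`. -/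
def binomF (n r : ℕ) : Finset (Finset ℕ) := (Finset.Icc 1 n).powersetCard r

/-- `𝒜(X) = {A ∈ 𝒜 : A ∩ X ≠ ∅}`. -/
def famX (𝒜 : Finset (Finset ℕ)) (X : Finset ℕ) : Finset (Finset ℕ) :=
  𝒜.filter fun A => (A ∩ X).Nonempty

/-- The star `𝒮_{n,r} = {A ∈ Binom([n],r) : 1 ∈ A}`. -/
def starF (n r : ℕ) : Finset (Finset ℕ) := (binomF n r).filter fun A => 1 ∈ A

/-- A family is intersecting if any two members meet. -/
def IntersectingF (𝒜 : Finset (Finset ℕ)) : Prop :=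
  ∀ A ∈ 𝒜, ∀ B ∈ 𝒜, (A ∩ B).Nonempty

/-- A family `𝒜 ⊆ Binom([n],r)` is compressed if `A ∈ 𝒜`, `B ∈ Binom([n],r)`, `B ≤ A`
    imply `B ∈ 𝒜`. -/
def CompressedF (n r : ℕ) (𝒜 : Finset (Finset ℕ)) : Prop :=
  ∀ A ∈ 𝒜, ∀ B ∈ binomF n r, SetLE B A → B ∈ 𝒜

/-- `F(r, n, 𝒢) = {A ∈ Binom([n],r) : A ≺ G for some G ∈ 𝒢}`. -/
def genF (r n : ℕ) (𝒢 : Finset (Finset ℕ)) : Finset (Finset ℕ) :=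
  (binomF n r).filter fun A => ∃ G ∈ 𝒢, SetPrec A G

/-- `𝒜_{n,r,s} = F(r, n, {[s, 2s-1]})`. -/
def Anrs (n r s : ℕ) : Finset (Finset ℕ) := genF r n {Finset.Icc s (2 * s - 1)}

/-- `X ⊆ [2,n]` is EKR for parameters `(n, r)` if `|𝒜(X)| ≤ |𝒮_{n,r}(X)|` for every
    compressed intersecting family `𝒜 ⊆ Binom([n],r)`. -/
def IsEKR (n r : ℕ) (X : Finset ℕ) : Prop :=
  X ⊆ Finset.Icc 2 n ∧
  ∀ 𝒜 ⊆ binomF n r, CompressedF n r 𝒜 → IntersectingF 𝒜 →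
    (famX 𝒜 X).card ≤ (famX (starF n r) X).card

/-- `X` is eventually EKR for `r` if it is EKR for `(n, r)` for all sufficiently large `n`. -/
def EventuallyEKR (r : ℕ) (X : Finset ℕ) : Prop :=
  ∃ N : ℕ, ∀ n ≥ N, IsEKR n r X

/-- `A` and `B` (r-element subsets of `[n]`) are cross intersecting if `C ∩ D ≠ ∅`
    for every `C ≤ A` and `D ≤ B`. -/
def CrossInt (n r : ℕ) (A B : Finset ℕ) : Prop :=
  ∀ C ∈ binomF n r, ∀ D ∈ binomF n r, SetLE C A → SetLE D B → (C ∩ D).Nonempty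

section BigBadAux

private theorem bbf_sortLemma (l : List ℕ) (h : l.Pairwise (· ≤ ·)) (j : ℕ) (hj : j < l.length)
    (c : ℕ) : l.getD j 0 ≤ c ↔ j + 1 ≤ (l.filter (fun x => x ≤ c)).length := by
  rw [List.getD_eq_getElem l 0 hj]
  constructor
  · intro hle
    have ht : (l.take (j+1)).filter (fun x => x ≤ c) = l.take (j+1) := by
      rw [List.filter_eq_self]
      intro a ha
      simp only [decide_eq_true_eq]
      obtain ⟨i, hi, rfl⟩ := List.mem_take_iff_getElem.mp ha
      have : l[i] ≤ l[j] := by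
        rcases Nat.lt_or_ge i j with h' | h'
        · exact List.pairwise_iff_getElem.mp h i j _ _ h'
        · have : i = j := by omega
          subst this; exact le_refl _
      exact this.trans hle
    have hsub : ((l.take (j+1)).filter (fun x => x ≤ c)).length
        ≤ (l.filter (fun x => x ≤ c)).length :=
      ((l.take_sublist (j+1)).filter _).length_le
    rw [ht] at hsub
    rwa [List.length_take, min_eq_left (by omega)] at hsub
  · intro hlen
    by_contra hgt
    push_neg at hgt
    have hdrop : (l.drop j).filter (fun x => x ≤ c) = [] := by
      rw [List.filter_eq_nil_iff]
      intro a ha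
      simp only [decide_eq_true_eq]
      obtain ⟨i, hi, rfl⟩ := List.mem_iff_getElem.mp ha
      have hji : j + i < l.length := by rw [List.length_drop] at hi; omega
      rw [List.getElem_drop]
      have : l[j] ≤ l[j+i] := by
        rcases Nat.eq_or_lt_of_le (Nat.le_add_right j i) with h' | h'
        · simp [← h']
        · exact List.pairwise_iff_getElem.mp h j (j+i) hj hji h'
      omega
    have := congrArg List.length
      (congrArg (List.filter (fun x => x ≤ c)) (List.take_append_drop j l))
    rw [List.filter_append, List.length_append, hdrop] at this
    have h2 : ((l.take j).filter (fun x => x ≤ c)).length ≤ j := by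
      have := ((l.take j).length_filter_le (fun x => x ≤ c))
      rw [List.length_take] at this; omega
    simp at this
    omega

private theorem bbf_filter_card_eq (A : Finset ℕ) (c : ℕ) :
    (A.filter (fun x => x ≤ c)).card = ((A.sort (· ≤ ·)).filter (fun x => x ≤ c)).length := by
  have hnd : ((A.sort (· ≤ ·)).filter (fun x => x ≤ c)).Nodup :=
    (A.sort_nodup (· ≤ ·)).filter _
  have : ((A.sort (· ≤ ·)).filter (fun x => x ≤ c)).toFinset = A.filter (fun x => x ≤ c) := by
    ext x
    simp [List.mem_filter, Finset.mem_sort]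
  rw [← this, List.card_toFinset, hnd.dedup]

private theorem bbf_nthEl_le_iff (A : Finset ℕ) {i : ℕ} (h1 : 1 ≤ i) (h2 : i ≤ A.card) (c : ℕ) :
    (nthEl A i ≤ c ↔ i ≤ (A.filter (fun x => x ≤ c)).card) := by
  have hlen : (A.sort (· ≤ ·)).length = A.card := Finset.length_sort _
  have hj : i - 1 < (A.sort (· ≤ ·)).length := by omega
  rw [nthEl, bbf_sortLemma _ (A.pairwise_sort (· ≤ ·)) _ hj c, bbf_filter_card_eq]
  omega

private theorem bbf_nthEl23_1 : nthEl {2,3} 1 = 2 := by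
  have h2 : nthEl {2,3} 1 ≤ 2 := (bbf_nthEl_le_iff {2,3} le_rfl (by decide) 2).mpr (by decide)
  have h1 : ¬ nthEl {2,3} 1 ≤ 1 := by
    rw [bbf_nthEl_le_iff {2,3} le_rfl (by decide) 1]; decide
  omega

private theorem bbf_nthEl23_2 : nthEl {2,3} 2 = 3 := by
  have h2 : nthEl {2,3} 2 ≤ 3 :=
    (bbf_nthEl_le_iff {2,3} (by norm_num) (by decide) 3).mpr (by decide)
  have h1 : ¬ nthEl {2,3} 2 ≤ 2 := by
    rw [bbf_nthEl_le_iff {2,3} (by norm_num) (by decide) 2]; decide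
  omega

private theorem bbf_prec23 (n r : ℕ) (hr : 4 ≤ r) (A : Finset ℕ) (hA : A ⊆ Finset.Icc 1 n)
    (hcard : A.card = r) :
    SetPrec A {2,3} ↔
      ((1 ∈ A ∧ 2 ∈ A) ∨ (1 ∈ A ∧ 3 ∈ A ∧ 2 ∉ A) ∨ (2 ∈ A ∧ 3 ∈ A ∧ 1 ∉ A)) := by
  have hc2 : ({2,3} : Finset ℕ).card = 2 := by decide
  have h12 : Finset.Icc 1 2 = ({1, 2} : Finset ℕ) := by decide
  rw [SetPrec, hc2, h12]
  simp only [Finset.mem_insert, Finset.mem_singleton, forall_eq_or_imp, forall_eq,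
    bbf_nthEl23_1, bbf_nthEl23_2]
  rw [bbf_nthEl_le_iff A (by norm_num) (by omega) 2, bbf_nthEl_le_iff A (by norm_num) (by omega) 3]
  have mem3 : ∀ x ∈ A, x ≤ 3 → x = 1 ∨ x = 2 ∨ x = 3 := by
    intro x hx hx3
    have := hA hx
    rw [Finset.mem_Icc] at this
    omega
  constructor
  · rintro ⟨-, hf2, hf3⟩
    have h2 : 1 < (A.filter (fun x => x ≤ 3)).card := by omega
    obtain ⟨x, hx, y, hy, hxy⟩ := Finset.one_lt_card.mp h2
    rw [Finset.mem_filter] at hx hy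
    have hx' := mem3 x hx.1 hx.2
    have hy' := mem3 y hy.1 hy.2
    have hxA := hx.1; have hyA := hy.1
    clear hx hy hf2 hf3
    rcases hx' with rfl|rfl|rfl <;> rcases hy' with rfl|rfl|rfl <;> first | omega | tauto
  · intro h
    refine ⟨by omega, ?_, ?_⟩
    · have : (A.filter (fun x => x ≤ 2)).Nonempty := by
        rcases h with ⟨h1,h2⟩|⟨h1,h2,h3⟩|⟨h1,h2,h3⟩
        · exact ⟨1, Finset.mem_filter.mpr ⟨h1, by norm_num⟩⟩
        · exact ⟨1, Finset.mem_filter.mpr ⟨h1, by norm_num⟩⟩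
        · exact ⟨2, Finset.mem_filter.mpr ⟨h1, by norm_num⟩⟩
      have := Finset.card_pos.mpr this
      omega
    · have : 1 < (A.filter (fun x => x ≤ 3)).card := by
        apply Finset.one_lt_card.mpr
        rcases h with ⟨h1,h2⟩|⟨h1,h2,h3⟩|⟨h1,h2,h3⟩
        · exact ⟨1, Finset.mem_filter.mpr ⟨h1, by norm_num⟩, 2,
            Finset.mem_filter.mpr ⟨h2, by norm_num⟩, by norm_num⟩
        · exact ⟨1, Finset.mem_filter.mpr ⟨h1, by norm_num⟩, 3,
            Finset.mem_filter.mpr ⟨h2, by norm_num⟩, by norm_num⟩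
        · exact ⟨2, Finset.mem_filter.mpr ⟨h1, by norm_num⟩, 3,
            Finset.mem_filter.mpr ⟨h2, by norm_num⟩, by norm_num⟩
      omega

private theorem bbf_count_pattern (n r : ℕ) (I E : Finset ℕ) (hI : I ⊆ Finset.Icc 1 n)
    (hE : E ⊆ Finset.Icc 1 n) (hd : Disjoint I E) (hIr : I.card ≤ r) :
    ((binomF n r).filter (fun A => I ⊆ A ∧ ∀ e ∈ E, e ∉ A)).card
      = (n - I.card - E.card).choose (r - I.card) := by
  have key : ((binomF n r).filter (fun A => I ⊆ A ∧ ∀ e ∈ E, e ∉ A)).card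
      = (((Finset.Icc 1 n) \ (I ∪ E)).powersetCard (r - I.card)).card := by
    apply Finset.card_bij' (fun A _ => A \ I) (fun B _ => B ∪ I)
    · intro A hA
      simp only [Finset.mem_filter, binomF, Finset.mem_powersetCard] at hA
      obtain ⟨⟨hsub, hcard⟩, hIA, hEA⟩ := hA
      rw [Finset.mem_powersetCard]
      constructor
      · intro x hx
        simp only [Finset.mem_sdiff, Finset.mem_union] at *
        rcases hx with ⟨hxA, hxI⟩
        exact ⟨hsub hxA, by rintro (h | h); exact hxI h; exact hEA x h hxA⟩
      · rw [Finset.card_sdiff_of_subset hIA, hcard]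
    · intro B hB
      rw [Finset.mem_powersetCard] at hB
      obtain ⟨hsub, hcard⟩ := hB
      have hBI : Disjoint B I := by
        refine Finset.disjoint_left.mpr fun x hxB hxI => ?_
        have := hsub hxB
        simp only [Finset.mem_sdiff, Finset.mem_union] at this
        exact this.2 (Or.inl hxI)
      simp only [Finset.mem_filter, binomF, Finset.mem_powersetCard]
      refine ⟨⟨?_, ?_⟩, ?_, ?_⟩
      · intro x hx
        rcases Finset.mem_union.mp hx with h | h
        · exact (Finset.mem_sdiff.mp (hsub h)).1
        · exact hI h
      · rw [Finset.card_union_of_disjoint hBI, hcard]; omega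
      · exact Finset.subset_union_right
      · intro e he hme
        rcases Finset.mem_union.mp hme with h | h
        · have := hsub h
          simp only [Finset.mem_sdiff, Finset.mem_union] at this
          exact this.2 (Or.inr he)
        · exact (Finset.disjoint_left.mp hd h) he
    · intro A hA
      simp only [Finset.mem_filter] at hA
      exact Finset.sdiff_union_of_subset hA.2.1
    · intro B hB
      rw [Finset.mem_powersetCard] at hB
      apply Finset.union_sdiff_cancel_right
      refine Finset.disjoint_left.mpr fun x hxB hxI => ?_
      have := hB.1 hxB
      simp only [Finset.mem_sdiff, Finset.mem_union] at this
      exact this.2 (Or.inl hxI)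
  rw [key, Finset.card_powersetCard, Finset.card_sdiff_of_subset (Finset.union_subset hI hE),
    Finset.card_union_of_disjoint hd, Nat.card_Icc]
  congr 1
  omega

private theorem bbf_keyNat (r n : ℕ) (hr : 4 ≤ r) (hn : 2 * r ≤ n)
    (H : (n - r - 1) * (n - r - 2) < (r - 2) * (n - 4)) :
    (n - 5).choose (r - 2) < (n - 4).choose (r - 3) := by
  set a := n - 5 with ha
  set b := r - 3 with hb
  have hab : b ≤ a := by omega
  have e1 : a.choose (b+1) * (b+1) = a.choose b * (a - b) := Nat.choose_succ_right_eq a b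
  have e2 : (a+1) * a.choose b = (a+1).choose (b+1) * (b+1) := (Nat.add_one_mul_choose_eq a b).symm ▸ rfl
  have e3 : (a+1).choose (b+1) * (b+1) = (a+1).choose b * (a+1-b) := Nat.choose_succ_right_eq (a+1) b
  have hpos : 0 < (a+1).choose b := Nat.choose_pos (by omega)
  have H' : (a+1-b) * (a-b) < (b+1) * (a+1) := by
    have h1 : a + 1 - b = n - r - 1 := by omega
    have h2 : a - b = n - r - 2 := by omega
    have h3 : b + 1 = r - 2 := by omega
    have h4 : a + 1 = n - 4 := by omega
    rw [h1, h2, h3, h4]; exact H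
  have chain : a.choose (b+1) * ((b+1) * (a+1)) < (a+1).choose b * ((b+1) * (a+1)) := by
    calc a.choose (b+1) * ((b+1) * (a+1)) = (a.choose (b+1) * (b+1)) * (a+1) := by ring
    _ = (a.choose b * (a - b)) * (a+1) := by rw [e1]
    _ = ((a+1) * a.choose b) * (a-b) := by ring
    _ = ((a+1).choose (b+1) * (b+1)) * (a-b) := by rw [e2]
    _ = ((a+1).choose b * (a+1-b)) * (a-b) := by rw [e3]
    _ = (a+1).choose b * ((a+1-b) * (a-b)) := by ring
    _ < (a+1).choose b * ((b+1) * (a+1)) := by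
        exact Nat.mul_lt_mul_of_le_of_lt (le_refl _) H' hpos
  have hfin : a.choose (b+1) < (a+1).choose b := Nat.lt_of_mul_lt_mul_right chain
  have g2 : r - 2 = b + 1 := by omega
  have g3 : n - 4 = a + 1 := by omega
  rw [g2, g3]; exact hfin

private theorem bbf_keyReal (r n : ℕ) (hr : 4 ≤ r) (hn : 2 * r ≤ n)
    (hn' : (n : ℝ) < (3 * (r : ℝ) + 1 + Real.sqrt (5 * (r : ℝ) ^ 2 - 22 * r + 25)) / 2) :
    (n - r - 1) * (n - r - 2) < (r - 2) * (n - 4) := by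
  have hr' : (4:ℝ) ≤ (r:ℝ) := by exact_mod_cast hr
  have hn'' : 2 * (r:ℝ) ≤ (n:ℝ) := by exact_mod_cast hn
  have hD : (0:ℝ) ≤ 5 * (r:ℝ) ^ 2 - 22 * r + 25 := by nlinarith [sq_nonneg (5*(r:ℝ) - 11)]
  set s := Real.sqrt (5 * (r : ℝ) ^ 2 - 22 * r + 25) with hs
  have hs2 : s ^ 2 = 5 * (r:ℝ) ^ 2 - 22 * r + 25 := Real.sq_sqrt hD
  have hlt : 2 * (n:ℝ) - 3 * r - 1 < s := by linarith
  have hnn : (0:ℝ) ≤ 2 * (n:ℝ) - 3 * r - 1 := by linarith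
  have hsq : (2 * (n:ℝ) - 3 * r - 1) ^ 2 < s ^ 2 := by
    have := mul_self_lt_mul_self hnn hlt
    nlinarith
  rw [hs2] at hsq
  have hreal : ((n:ℝ) - r - 1) * ((n:ℝ) - r - 2) < ((r:ℝ) - 2) * ((n:ℝ) - 4) := by nlinarith
  have c1 : ((n - r - 1 : ℕ) : ℝ) = (n:ℝ) - r - 1 := by
    have h : r + 1 ≤ n := by omega
    push_cast [Nat.sub_sub, Nat.cast_sub h]; ring
  have c2 : ((n - r - 2 : ℕ) : ℝ) = (n:ℝ) - r - 2 := by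
    have h : r + 2 ≤ n := by omega
    push_cast [Nat.sub_sub, Nat.cast_sub h]; ring
  have c3 : ((r - 2 : ℕ) : ℝ) = (r:ℝ) - 2 := by
    have h : 2 ≤ r := by omega
    push_cast [Nat.cast_sub h]; ring
  have c4 : ((n - 4 : ℕ) : ℝ) = (n:ℝ) - 4 := by
    have h : 4 ≤ n := by omega
    push_cast [Nat.cast_sub h]; ring
  have : ((n - r - 1 : ℕ) : ℝ) * ((n - r - 2 : ℕ) : ℝ)
      < ((r - 2 : ℕ) : ℝ) * ((n - 4 : ℕ) : ℝ) := by
    rw [c1, c2, c3, c4]; exact hreal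
  exact_mod_cast this

end BigBadAux

set_option maxHeartbeats 2000000

/-- Proposition of Section 2: for `r ≥ 4`, `X = {2, 4, r+2}` and
`𝒜 = F(r, n, {{2,3}})`, if `2r ≤ n < (3r + 1 + √(5r² − 22r + 25))/2` then
`|𝒜(X)| > |𝒮_{n,r}(X)|`. -/
theorem big_bad_family (r n : ℕ) (hr : 4 ≤ r) (hn : 2 * r ≤ n)
    (hn' : (n : ℝ) < (3 * (r : ℝ) + 1 + Real.sqrt (5 * (r : ℝ) ^ 2 - 22 * r + 25)) / 2) :
    (famX (starF n r) ({2, 4, r + 2} : Finset ℕ)).card <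
      (famX (genF r n {({2, 3} : Finset ℕ)}) ({2, 4, r + 2} : Finset ℕ)).card := by
  have hn8 : 8 ≤ n := by omega
  have hX : ∀ A : Finset ℕ, (A ∩ ({2,4,r+2} : Finset ℕ)).Nonempty ↔
      (2 ∈ A ∨ 4 ∈ A ∨ r + 2 ∈ A) := by
    intro A
    constructor
    · rintro ⟨x, hx⟩
      rw [Finset.mem_inter, Finset.mem_insert, Finset.mem_insert, Finset.mem_singleton] at hx
      rcases hx with ⟨hxA, rfl | rfl | rfl⟩ <;> tauto
    · rintro (h | h | h) <;> exact ⟨_, Finset.mem_inter.mpr ⟨h, by simp⟩⟩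
  -- the star side
  have hstar : famX (starF n r) {2,4,r+2} =
      ((binomF n r).filter (fun A => ({1,2} : Finset ℕ) ⊆ A ∧ ∀ e ∈ (∅ : Finset ℕ), e ∉ A)) ∪
      ((binomF n r).filter (fun A => ({1,4} : Finset ℕ) ⊆ A ∧ ∀ e ∈ ({(2:ℕ)} : Finset ℕ), e ∉ A)) ∪
      ((binomF n r).filter (fun A => ({1,r+2} : Finset ℕ) ⊆ A ∧
        ∀ e ∈ ({(2:ℕ),(4:ℕ)} : Finset ℕ), e ∉ A)) := by
    ext A
    by_cases hAb : A ∈ binomF n r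
    · simp only [famX, starF, Finset.mem_filter, Finset.mem_union, hX, hAb, true_and,
        Finset.insert_subset_iff, Finset.singleton_subset_iff, Finset.notMem_empty,
        false_implies, implies_true, Finset.mem_insert, Finset.mem_singleton,
        forall_eq_or_imp, forall_eq, and_true]
      tauto
    · simp only [famX, starF, Finset.mem_filter, Finset.mem_union, hAb, false_and]
      tauto
  have hAfam : famX (genF r n {({2,3} : Finset ℕ)}) {2,4,r+2} =
      ((binomF n r).filter (fun A => ({1,2} : Finset ℕ) ⊆ A ∧ ∀ e ∈ (∅ : Finset ℕ), e ∉ A)) ∪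
      ((binomF n r).filter (fun A => ({2,3} : Finset ℕ) ⊆ A ∧ ∀ e ∈ ({(1:ℕ)} : Finset ℕ), e ∉ A)) ∪
      ((binomF n r).filter (fun A => ({1,3,4} : Finset ℕ) ⊆ A ∧ ∀ e ∈ ({(2:ℕ)} : Finset ℕ), e ∉ A)) ∪
      ((binomF n r).filter (fun A => ({1,3,r+2} : Finset ℕ) ⊆ A ∧
        ∀ e ∈ ({(2:ℕ),(4:ℕ)} : Finset ℕ), e ∉ A)) := by
    ext A
    by_cases hAb : A ∈ binomF n r
    · have hmem := hAb
      rw [binomF, Finset.mem_powersetCard] at hmem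
      obtain ⟨hsub, hcard⟩ := hmem
      simp only [famX, genF, Finset.mem_filter, Finset.mem_union, hX, hAb, true_and,
        Finset.mem_singleton, exists_eq_left, bbf_prec23 n r hr A hsub hcard,
        Finset.insert_subset_iff, Finset.singleton_subset_iff, Finset.notMem_empty,
        false_implies, implies_true, Finset.mem_insert,
        forall_eq_or_imp, forall_eq, and_true]
      tauto
    · simp only [famX, genF, Finset.mem_filter, Finset.mem_union, hAb, false_and]
      tauto
  -- disjointness facts
  have dis : ∀ (P Q : Finset ℕ → Prop) [DecidablePred P] [DecidablePred Q],
      (∀ A, P A → Q A → False) →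
      Disjoint ((binomF n r).filter P) ((binomF n r).filter Q) := by
    intro P Q _ _ h
    refine Finset.disjoint_left.mpr fun A hA hB => ?_
    rw [Finset.mem_filter] at hA hB
    exact h A hA.2 hB.2
  -- cardinalities of the pieces
  have hsubI : ∀ x y : ℕ, 1 ≤ x → x ≤ n → 1 ≤ y → y ≤ n →
      ({x, y} : Finset ℕ) ⊆ Finset.Icc 1 n := by
    intro x y h1 h2 h3 h4
    simp only [Finset.insert_subset_iff, Finset.singleton_subset_iff, Finset.mem_Icc]
    omega
  have hcP1 : ((binomF n r).filter
      (fun A => ({1,2} : Finset ℕ) ⊆ A ∧ ∀ e ∈ (∅ : Finset ℕ), e ∉ A)).card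
      = (n-2).choose (r-2) := by
    have hc : ({1,2} : Finset ℕ).card = 2 := by decide
    rw [bbf_count_pattern n r {1,2} ∅ (hsubI 1 2 (by omega) (by omega) (by omega) (by omega))
      (Finset.empty_subset _) (Finset.disjoint_empty_right _) (by rw [hc]; omega), hc]
    simp
  have hcP2 : ((binomF n r).filter
      (fun A => ({1,4} : Finset ℕ) ⊆ A ∧ ∀ e ∈ ({(2:ℕ)} : Finset ℕ), e ∉ A)).card
      = (n-3).choose (r-2) := by
    have hc : ({1,4} : Finset ℕ).card = 2 := by decide
    rw [bbf_count_pattern n r {1,4} {2} (hsubI 1 4 (by omega) (by omega) (by omega) (by omega))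
      (by simp [Finset.singleton_subset_iff, Finset.mem_Icc]; omega)
      (by simp [Finset.disjoint_left]) (by rw [hc]; omega), hc, Finset.card_singleton]
    congr 1
  have hcP3 : ((binomF n r).filter
      (fun A => ({1,r+2} : Finset ℕ) ⊆ A ∧ ∀ e ∈ ({(2:ℕ),(4:ℕ)} : Finset ℕ), e ∉ A)).card
      = (n-4).choose (r-2) := by
    have hc : ({1,r+2} : Finset ℕ).card = 2 := by
      rw [Finset.card_insert_of_notMem (by simp), Finset.card_singleton]
    have hce : ({2,4} : Finset ℕ).card = 2 := by decide
    rw [bbf_count_pattern n r {1,r+2} {2,4}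
      (hsubI 1 (r+2) (by omega) (by omega) (by omega) (by omega))
      (hsubI 2 4 (by omega) (by omega) (by omega) (by omega))
      (by simp [Finset.disjoint_left]; omega) (by rw [hc]; omega), hc, hce]
    congr 1
  have hcQ2 : ((binomF n r).filter
      (fun A => ({2,3} : Finset ℕ) ⊆ A ∧ ∀ e ∈ ({(1:ℕ)} : Finset ℕ), e ∉ A)).card
      = (n-3).choose (r-2) := by
    have hc : ({2,3} : Finset ℕ).card = 2 := by decide
    rw [bbf_count_pattern n r {2,3} {1} (hsubI 2 3 (by omega) (by omega) (by omega) (by omega))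
      (by simp [Finset.singleton_subset_iff, Finset.mem_Icc]; omega)
      (by simp [Finset.disjoint_left]) (by rw [hc]; omega), hc, Finset.card_singleton]
    congr 1
  have hcQ3 : ((binomF n r).filter
      (fun A => ({1,3,4} : Finset ℕ) ⊆ A ∧ ∀ e ∈ ({(2:ℕ)} : Finset ℕ), e ∉ A)).card
      = (n-4).choose (r-3) := by
    have hc : ({1,3,4} : Finset ℕ).card = 3 := by decide
    rw [bbf_count_pattern n r {1,3,4} {2} (by
        simp only [Finset.insert_subset_iff, Finset.singleton_subset_iff, Finset.mem_Icc]
        omega)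
      (by simp [Finset.singleton_subset_iff, Finset.mem_Icc]; omega)
      (by simp [Finset.disjoint_left]) (by rw [hc]; omega), hc, Finset.card_singleton]
    congr 1
  have hcQ4 : ((binomF n r).filter
      (fun A => ({1,3,r+2} : Finset ℕ) ⊆ A ∧ ∀ e ∈ ({(2:ℕ),(4:ℕ)} : Finset ℕ), e ∉ A)).card
      = (n-5).choose (r-3) := by
    have hc : ({1,3,r+2} : Finset ℕ).card = 3 := by
      rw [Finset.card_insert_of_notMem
          (by simp only [Finset.mem_insert, Finset.mem_singleton]; omega),
        Finset.card_insert_of_notMem (by simp only [Finset.mem_singleton]; omega),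
        Finset.card_singleton]
    have hce : ({2,4} : Finset ℕ).card = 2 := by decide
    rw [bbf_count_pattern n r {1,3,r+2} {2,4} (by
        simp only [Finset.insert_subset_iff, Finset.singleton_subset_iff, Finset.mem_Icc]
        omega)
      (hsubI 2 4 (by omega) (by omega) (by omega) (by omega))
      (by simp [Finset.disjoint_left]; omega) (by rw [hc]; omega), hc, hce]
    congr 1
  -- star cardinality
  have hstarcard : (famX (starF n r) {2,4,r+2}).card
      = (n-2).choose (r-2) + (n-3).choose (r-2) + (n-4).choose (r-2) := by
    rw [hstar, Finset.card_union_of_disjoint, Finset.card_union_of_disjoint, hcP1, hcP2, hcP3]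
    · exact dis _ _ (fun A h1 h2 =>
        h2.2 2 (by simp) (h1.1 (by simp)))
    · rw [Finset.disjoint_union_left]
      constructor
      · exact dis _ _ (fun A h1 h2 => h2.2 2 (by simp) (h1.1 (by simp)))
      · exact dis _ _ (fun A h1 h2 => h2.2 4 (by simp) (h1.1 (by simp)))
  have hAcard : (famX (genF r n {({2,3} : Finset ℕ)}) {2,4,r+2}).card
      = (n-2).choose (r-2) + (n-3).choose (r-2) + (n-4).choose (r-3) + (n-5).choose (r-3) := by
    rw [hAfam, Finset.card_union_of_disjoint, Finset.card_union_of_disjoint,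
      Finset.card_union_of_disjoint, hcP1, hcQ2, hcQ3, hcQ4]
    · exact dis _ _ (fun A h1 h2 => h2.2 1 (by simp) (h1.1 (by simp)))
    · rw [Finset.disjoint_union_left]
      constructor
      · exact dis _ _ (fun A h1 h2 => h2.2 2 (by simp) (h1.1 (by simp)))
      · exact dis _ _ (fun A h1 h2 => h2.2 2 (by simp) (h1.1 (by simp)))
    · rw [Finset.disjoint_union_left, Finset.disjoint_union_left]
      refine ⟨⟨?_, ?_⟩, ?_⟩
      · exact dis _ _ (fun A h1 h2 => h2.2 2 (by simp) (h1.1 (by simp)))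
      · exact dis _ _ (fun A h1 h2 => h2.2 2 (by simp) (h1.1 (by simp)))
      · exact dis _ _ (fun A h1 h2 => h2.2 4 (by simp) (h1.1 (by simp)))
  rw [hstarcard, hAcard]
  have hkey : (n - 5).choose (r - 2) < (n - 4).choose (r - 3) :=
    bbf_keyNat r n hr hn (bbf_keyReal r n hr hn hn')
  have hpascal : (n-4).choose (r-2) = (n-5).choose (r-3) + (n-5).choose (r-2) := by
    have h4 : n - 4 = (n - 5) + 1 := by omega
    have h2 : r - 2 = (r - 3) + 1 := by omega
    rw [h4, h2, Nat.choose_succ_succ']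
  omega
end

section
/- Let 𝒜 ⊆ Binom([n],r) be a compressed family. Then 𝒜 is intersecting if and only if for every A = {a_1<⋯<a_r} ∈ 𝒜 and B = {b_1<⋯<b_r} ∈ 𝒜 there exists a pair i, j with 1 ≤ i, j ≤ r such that i + j > max{a_i, b_j}. -/
open Finset

lemma nthEl_mem {S : Finset ℕ} {i : ℕ} (h1 : 1 ≤ i) (h2 : i ≤ S.card) : nthEl S i ∈ S := by
  have hl : i - 1 < (S.sort (· ≤ ·)).length := by rw [Finset.length_sort]; omega
  rw [nthEl, List.getD_eq_getElem _ _ hl]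
  exact (Finset.mem_sort _).1 (List.getElem_mem hl)

lemma nthEl_lt_nthEl {S : Finset ℕ} {i j : ℕ} (h1 : 1 ≤ i) (hij : i < j) (h2 : j ≤ S.card) :
    nthEl S i < nthEl S j := by
  have hi : i - 1 < (S.sort (· ≤ ·)).length := by rw [Finset.length_sort]; omega
  have hj : j - 1 < (S.sort (· ≤ ·)).length := by rw [Finset.length_sort]; omega
  rw [nthEl, nthEl, List.getD_eq_getElem _ _ hi, List.getD_eq_getElem _ _ hj]
  exact List.SortedLT.strictMono_get (Finset.sortedLT_sort S) (by simp [Fin.lt_def]; omega)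

lemma exists_nthEl {S : Finset ℕ} {x : ℕ} (hx : x ∈ S) :
    ∃ i, 1 ≤ i ∧ i ≤ S.card ∧ nthEl S i = x := by
  have hx' : x ∈ S.sort (· ≤ ·) := (Finset.mem_sort _).2 hx
  obtain ⟨k, hk, hke⟩ := List.mem_iff_getElem.1 hx'
  refine ⟨k + 1, by omega, ?_, ?_⟩
  · have := Finset.length_sort (α := ℕ) (· ≤ ·) (s := S); omega
  · rw [nthEl, List.getD_eq_getElem _ _ (by simpa using hk)]; simpa using hke

lemma nthEl_le_nthEl {S : Finset ℕ} {i j : ℕ} (h1 : 1 ≤ i) (hij : i ≤ j) (h2 : j ≤ S.card) :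
    nthEl S i ≤ nthEl S j := by
  rcases eq_or_lt_of_le hij with rfl | h
  · exact le_rfl
  · exact (nthEl_lt_nthEl h1 h h2).le

lemma card_filter_le_nthEl {S : Finset ℕ} {i : ℕ} (h1 : 1 ≤ i) (h2 : i ≤ S.card) :
    (S.filter (· ≤ nthEl S i)).card = i := by
  have : S.filter (· ≤ nthEl S i) = (Finset.Icc 1 i).image (nthEl S) := by
    ext x
    simp only [Finset.mem_filter, Finset.mem_image, Finset.mem_Icc]
    constructor
    · rintro ⟨hxS, hxle⟩
      obtain ⟨m, hm1, hm2, rfl⟩ := exists_nthEl hxS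
      refine ⟨m, ⟨hm1, ?_⟩, rfl⟩
      by_contra h
      exact absurd hxle (not_le.2 (nthEl_lt_nthEl h1 (by omega) hm2))
    · rintro ⟨m, ⟨hm1, hm2⟩, rfl⟩
      exact ⟨nthEl_mem hm1 (le_trans hm2 h2), nthEl_le_nthEl hm1 hm2 h2⟩
  rw [this, Finset.card_image_of_injOn, Nat.card_Icc]; · omega
  intro a ha b hb hab
  simp only [Finset.mem_coe, Finset.mem_Icc] at ha hb
  by_contra hne
  rcases Nat.lt_or_ge a b with h | h
  · exact absurd hab (nthEl_lt_nthEl ha.1 h (le_trans hb.2 h2)).ne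
  · exact absurd hab.symm (nthEl_lt_nthEl hb.1 (by omega) (le_trans ha.2 h2)).ne

lemma nthEl_eq_of_card {S : Finset ℕ} {x i : ℕ} (hx : x ∈ S)
    (h : (S.filter (· ≤ x)).card = i) : nthEl S i = x := by
  obtain ⟨m, hm1, hm2, rfl⟩ := exists_nthEl hx
  rw [card_filter_le_nthEl hm1 hm2] at h; subst h; rfl

lemma nthEl_le_of_card {S : Finset ℕ} {x m : ℕ} (h : (S.filter (· ≤ x)).card = m)
    (hm : 1 ≤ m) : nthEl S m ≤ x := by
  have hne : (S.filter (· ≤ x)).Nonempty := Finset.card_pos.1 (by omega)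
  set y := (S.filter (· ≤ x)).max' hne with hy
  have hymem := (S.filter (· ≤ x)).max'_mem hne
  simp only [Finset.mem_filter] at hymem
  have hfil : S.filter (· ≤ y) = S.filter (· ≤ x) := by
    apply Finset.Subset.antisymm
    · intro z hz
      simp only [Finset.mem_filter] at hz ⊢
      exact ⟨hz.1, le_trans hz.2 hymem.2⟩
    · intro z hz
      have hz' := hz
      simp only [Finset.mem_filter] at hz'
      exact Finset.mem_filter.2 ⟨hz'.1, Finset.le_max' _ z hz⟩
  have : nthEl S m = y := nthEl_eq_of_card hymem.1 (by rw [hfil, h])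
  rw [this]; exact hymem.2

lemma le_nthEl {S : Finset ℕ} {n i : ℕ} (hS : S ⊆ Finset.Icc 1 n) (h1 : 1 ≤ i)
    (h2 : i ≤ S.card) : i ≤ nthEl S i := by
  have := card_filter_le_nthEl h1 h2
  have hsub : S.filter (· ≤ nthEl S i) ⊆ Finset.Icc 1 (nthEl S i) := by
    intro y hy
    simp only [Finset.mem_filter] at hy
    have := hS hy.1
    simp only [Finset.mem_Icc] at *
    exact ⟨(Finset.mem_Icc.1 (hS hy.1)).1, hy.2⟩
  have := Finset.card_le_card hsub
  simp [Nat.card_Icc] at this; omega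

lemma nthEl_add_le {S : Finset ℕ} {i i' : ℕ} (h1 : 1 ≤ i') (hii : i' ≤ i) (h2 : i ≤ S.card) :
    nthEl S i' + (i - i') ≤ nthEl S i := by
  have hG := card_filter_le_nthEl h1 (le_trans hii h2)
  have hF := card_filter_le_nthEl (le_trans h1 hii) h2
  have hle : nthEl S i' ≤ nthEl S i := nthEl_le_nthEl h1 hii h2
  have hsub : S.filter (· ≤ nthEl S i') ⊆ S.filter (· ≤ nthEl S i) := by
    intro y hy; simp only [Finset.mem_filter] at *; exact ⟨hy.1, le_trans hy.2 hle⟩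
  have hdiff : (S.filter (· ≤ nthEl S i) \ S.filter (· ≤ nthEl S i')) ⊆
      Finset.Icc (nthEl S i' + 1) (nthEl S i) := by
    intro y hy
    simp only [Finset.mem_sdiff, Finset.mem_filter, Finset.mem_Icc, not_and, not_le] at hy ⊢
    exact ⟨hy.2 hy.1.1, hy.1.2⟩
  have := Finset.card_le_card hdiff
  rw [Finset.card_sdiff_of_subset hsub, hF, hG, Nat.card_Icc] at this
  omega

lemma nthEl_image {r : ℕ} {f : ℕ → ℕ} (hf : ∀ a b, 1 ≤ a → a < b → b ≤ r → f a < f b)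
    {j : ℕ} (h1 : 1 ≤ j) (h2 : j ≤ r) :
    nthEl ((Finset.Icc 1 r).image f) j = f j := by
  have hinj : Set.InjOn f (Finset.Icc 1 r) := by
    intro a ha b hb hab
    simp only [Finset.mem_coe, Finset.mem_Icc] at ha hb
    by_contra hne
    rcases Nat.lt_or_ge a b with h | h
    · exact absurd hab (hf a b ha.1 h hb.2).ne
    · exact absurd hab.symm (hf b a hb.1 (by omega) ha.2).ne
  apply nthEl_eq_of_card
  · exact Finset.mem_image_of_mem f (Finset.mem_Icc.2 ⟨h1, h2⟩)
  · have : ((Finset.Icc 1 r).image f).filter (· ≤ f j) = (Finset.Icc 1 j).image f := by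
      ext x
      simp only [Finset.mem_filter, Finset.mem_image, Finset.mem_Icc]
      constructor
      · rintro ⟨⟨m, ⟨hm1, hm2⟩, rfl⟩, hle⟩
        refine ⟨m, ⟨hm1, ?_⟩, rfl⟩
        by_contra h
        exact absurd hle (not_le.2 (hf j m h1 (by omega) hm2))
      · rintro ⟨m, ⟨hm1, hm2⟩, rfl⟩
        refine ⟨⟨m, ⟨hm1, le_trans hm2 h2⟩, rfl⟩, ?_⟩
        rcases eq_or_lt_of_le hm2 with rfl | h
        · exact le_rfl
        · exact (hf m j hm1 h h2).le
    rw [this, Finset.card_image_of_injOn, Nat.card_Icc]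
    · omega
    · exact hinj.mono (by intro x hx; simp only [Finset.mem_coe, Finset.mem_Icc] at *; omega)

lemma card_nthEl_image {r : ℕ} {f : ℕ → ℕ} (hf : ∀ a b, 1 ≤ a → a < b → b ≤ r → f a < f b) :
    ((Finset.Icc 1 r).image f).card = r := by
  rw [Finset.card_image_of_injOn, Nat.card_Icc]; · omega
  intro a ha b hb hab
  simp only [Finset.mem_coe, Finset.mem_Icc] at ha hb
  by_contra hne
  rcases Nat.lt_or_ge a b with h | h
  · exact absurd hab (hf a b ha.1 h hb.2).ne
  · exact absurd hab.symm (hf b a hb.1 (by omega) ha.2).ne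
lemma downclosed_eq_Icc {r : ℕ} {F : Finset ℕ} (hF : F ⊆ Finset.Icc 1 r)
    (hdc : ∀ i ∈ F, ∀ i', 1 ≤ i' → i' ≤ i → i' ∈ F) : F = Finset.Icc 1 F.card := by
  have hsub : F ⊆ Finset.Icc 1 F.card := by
    intro i hi
    have h1 : 1 ≤ i := (Finset.mem_Icc.1 (hF hi)).1
    have hIccF : Finset.Icc 1 i ⊆ F := fun i' hi' =>
      hdc i hi i' (Finset.mem_Icc.1 hi').1 (Finset.mem_Icc.1 hi').2
    have := Finset.card_le_card hIccF
    rw [Nat.card_Icc] at this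
    exact Finset.mem_Icc.2 ⟨h1, by omega⟩
  exact Finset.eq_of_subset_of_card_le hsub (by rw [Nat.card_Icc]; omega)


/-- Proposition `p.intcond`: a compressed family `𝒜 ⊆ Binom([n],r)` is
intersecting iff for all `A, B ∈ 𝒜` there are `1 ≤ i, j ≤ r` with `i + j > max{a_i, b_j}`. -/
theorem compressed_intersecting_iff (n r : ℕ) (𝒜 : Finset (Finset ℕ))
    (h𝒜 : 𝒜 ⊆ binomF n r) (hc : CompressedF n r 𝒜) :
    IntersectingF 𝒜 ↔
      ∀ A ∈ 𝒜, ∀ B ∈ 𝒜, ∃ i j : ℕ, 1 ≤ i ∧ i ≤ r ∧ 1 ≤ j ∧ j ≤ r ∧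
        max (nthEl A i) (nthEl B j) < i + j := by
  constructor
  · intro hint A hA B hB
    have hAbin := h𝒜 hA; have hBbin := h𝒜 hB
    rw [binomF, Finset.mem_powersetCard] at hAbin hBbin
    obtain ⟨hAsub, hAcard⟩ := hAbin
    obtain ⟨hBsub, hBcard⟩ := hBbin
    rcases Nat.eq_zero_or_pos r with rfl | hr
    · exfalso
      have hA0 : A = ∅ := Finset.card_eq_zero.1 hAcard
      obtain ⟨x, hx⟩ := hint A hA A hA
      simp [hA0] at hx
    rcases Nat.lt_or_ge n (2 * r) with hn | hn
    · refine ⟨r, r, hr, le_rfl, hr, le_rfl, ?_⟩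
      have h1 := hAsub (nthEl_mem hr (by omega))
      have h2 := hBsub (nthEl_mem hr (by omega))
      simp only [Finset.mem_Icc] at h1 h2
      simp only [max_lt_iff]; omega
    · by_contra hcon
      push_neg at hcon
      set t : ℕ → ℕ := fun j => ((Finset.Icc 1 r).filter (fun i => nthEl A i < i + j)).card
        with ht
      have ht_le_r : ∀ j, t j ≤ r := by
        intro j
        have htj : t j = ((Finset.Icc 1 r).filter (fun i => nthEl A i < i + j)).card := rfl
        have := Finset.card_le_card (Finset.filter_subset
          (fun i => nthEl A i < i + j) (Finset.Icc 1 r))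
        rw [Nat.card_Icc] at this; omega
      have ht_mono : ∀ j j', j ≤ j' → t j ≤ t j' := by
        intro j j' hjj
        apply Finset.card_le_card
        intro x hx
        simp only [Finset.mem_filter] at hx ⊢
        exact ⟨hx.1, by omega⟩
      have hfilter_eq : ∀ j, ((Finset.Icc 1 r).filter (fun i => nthEl A i < i + j))
          = Finset.Icc 1 (t j) := by
        intro j
        apply downclosed_eq_Icc (Finset.filter_subset _ _)
        intro i hi i' h1' h2'
        simp only [Finset.mem_filter, Finset.mem_Icc] at hi ⊢
        refine ⟨⟨h1', le_trans h2' hi.1.2⟩, ?_⟩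
        have := nthEl_add_le h1' h2' (by omega : i ≤ A.card)
        omega
      have hdB : ∀ j, 1 ≤ j → j ≤ r → j + t j ≤ nthEl B j := by
        intro j h1j h2j
        rcases Nat.eq_zero_or_pos (t j) with h0 | hpos
        · rw [h0]
          simpa using le_nthEl hBsub h1j (by omega)
        · have htmem : t j ∈ (Finset.Icc 1 r).filter (fun i => nthEl A i < i + j) := by
            rw [hfilter_eq j]; exact Finset.mem_Icc.2 ⟨hpos, le_rfl⟩
          simp only [Finset.mem_filter] at htmem
          have := hcon (t j) j hpos (ht_le_r j) h1j h2j
          simp only [le_max_iff] at this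
          omega
      have hdmono : ∀ a b, 1 ≤ a → a < b → b ≤ r → a + t a < b + t b := by
        intro a b h1 h2 h3
        have := ht_mono a b h2.le; omega
      set D : Finset ℕ := (Finset.Icc 1 r).image (fun j => j + t j) with hD
      have hDcard : D.card = r := card_nthEl_image hdmono
      have hnthD : ∀ j, 1 ≤ j → j ≤ r → nthEl D j = j + t j := fun j h1 h2 =>
        nthEl_image hdmono h1 h2
      have hDsub2r : D ⊆ Finset.Icc 1 (2 * r) := by
        intro x hx
        simp only [hD, Finset.mem_image, Finset.mem_Icc] at hx
        obtain ⟨j, ⟨hj1, hj2⟩, rfl⟩ := hx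
        have := ht_le_r j
        exact Finset.mem_Icc.2 ⟨by omega, by omega⟩
      set C : Finset ℕ := Finset.Icc 1 (2 * r) \ D with hC
      have hCcard : C.card = r := by
        rw [hC, Finset.card_sdiff_of_subset hDsub2r, Nat.card_Icc, hDcard]; omega
      have hCsub : C ⊆ Finset.Icc 1 n := by
        intro x hx
        have := (Finset.mem_Icc.1 (Finset.mem_sdiff.1 hx).1)
        exact Finset.mem_Icc.2 ⟨this.1, by omega⟩
      have hDsubn : D ⊆ Finset.Icc 1 n := by
        intro x hx
        have := Finset.mem_Icc.1 (hDsub2r hx)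
        exact Finset.mem_Icc.2 ⟨this.1, by omega⟩
      have hcA : ∀ i, 1 ≤ i → i ≤ r → nthEl C i ≤ nthEl A i := by
        intro i h1i h2i
        have hcmem : nthEl C i ∈ C := nthEl_mem h1i (by omega)
        set c := nthEl C i with hcdef
        have hcIcc := Finset.mem_Icc.1 (Finset.mem_sdiff.1 hcmem).1
        have hcnD : c ∉ D := (Finset.mem_sdiff.1 hcmem).2
        set s := (D.filter (· ≤ c)).card with hs
        have hCfil : (C.filter (· ≤ c)).card = i :=
          card_filter_le_nthEl h1i (by omega)
        have hIccfil : ((Finset.Icc 1 (2 * r)).filter (· ≤ c)).card = c := by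
          have : (Finset.Icc 1 (2 * r)).filter (· ≤ c) = Finset.Icc 1 c := by
            ext x
            simp only [Finset.mem_filter, Finset.mem_Icc]
            omega
          rw [this, Nat.card_Icc]; omega
        have hsplit : (Finset.Icc 1 (2 * r)).filter (· ≤ c)
            = C.filter (· ≤ c) ∪ D.filter (· ≤ c) := by
          ext x
          simp only [Finset.mem_union, Finset.mem_filter, hC, Finset.mem_sdiff]
          constructor
          · rintro ⟨hx1, hx2⟩
            by_cases hxD : x ∈ D
            · exact Or.inr ⟨hxD, hx2⟩
            · exact Or.inl ⟨⟨hx1, hxD⟩, hx2⟩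
          · rintro (⟨⟨hx1, _⟩, hx2⟩ | ⟨hx1, hx2⟩)
            · exact ⟨hx1, hx2⟩
            · exact ⟨hDsub2r hx1, hx2⟩
        have hdisjCD : Disjoint (C.filter (· ≤ c)) (D.filter (· ≤ c)) := by
          apply Finset.disjoint_filter_filter
          rw [hC]; exact Finset.sdiff_disjoint
        have hcis : c = i + s := by
          have := Finset.card_union_of_disjoint hdisjCD
          rw [← hsplit, hIccfil, hCfil, ← hs] at this
          omega
        rcases Nat.eq_zero_or_pos s with h0 | hspos
        · have := le_nthEl hAsub h1i (by omega : i ≤ A.card)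
          omega
        · have hsr : s ≤ r := by
            rw [hs, ← hDcard]
            exact Finset.card_le_card (Finset.filter_subset _ _)
          have hdsle : nthEl D s ≤ c := nthEl_le_of_card hs.symm hspos
          have hdsne : nthEl D s ≠ c := by
            intro h
            exact hcnD (h ▸ nthEl_mem hspos (by omega))
          rw [hnthD s hspos hsr] at hdsle hdsne
          have hts : t s < i := by omega
          have hinotin : i ∉ (Finset.Icc 1 r).filter (fun i' => nthEl A i' < i' + s) := by
            rw [hfilter_eq s]
            simp only [Finset.mem_Icc]; omega
          simp only [Finset.mem_filter, Finset.mem_Icc, not_and, not_lt] at hinotin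
          have := hinotin ⟨h1i, h2i⟩
          omega
      have hCbin : C ∈ binomF n r := by
        rw [binomF, Finset.mem_powersetCard]; exact ⟨hCsub, hCcard⟩
      have hDbin : D ∈ binomF n r := by
        rw [binomF, Finset.mem_powersetCard]; exact ⟨hDsubn, hDcard⟩
      have hCle : SetLE C A := by
        refine ⟨by omega, ?_⟩
        intro i hi
        rw [hCcard] at hi
        exact hcA i (Finset.mem_Icc.1 hi).1 (Finset.mem_Icc.1 hi).2
      have hDle : SetLE D B := by
        refine ⟨by omega, ?_⟩
        intro j hj
        rw [hDcard] at hj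
        obtain ⟨h1j, h2j⟩ := Finset.mem_Icc.1 hj
        rw [hnthD j h1j h2j]
        exact hdB j h1j h2j
      have hCA := hc A hA C hCbin hCle
      have hDA := hc B hB D hDbin hDle
      obtain ⟨x, hx⟩ := hint C hCA D hDA
      rw [Finset.mem_inter] at hx
      exact (Finset.mem_sdiff.1 hx.1).2 hx.2
  · intro h A hA B hB
    obtain ⟨i, j, h1i, h2i, h1j, h2j, hmax⟩ := h A hA B hB
    have hAbin := h𝒜 hA; have hBbin := h𝒜 hB
    rw [binomF, Finset.mem_powersetCard] at hAbin hBbin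
    obtain ⟨hAsub, hAcard⟩ := hAbin
    obtain ⟨hBsub, hBcard⟩ := hBbin
    simp only [max_lt_iff] at hmax
    by_contra hne
    rw [Finset.not_nonempty_iff_eq_empty] at hne
    have hFA : (A.filter (· ≤ nthEl A i)).card = i := card_filter_le_nthEl h1i (by omega)
    have hFB : (B.filter (· ≤ nthEl B j)).card = j := card_filter_le_nthEl h1j (by omega)
    have hdisj : Disjoint (A.filter (· ≤ nthEl A i)) (B.filter (· ≤ nthEl B j)) := by
      rw [Finset.disjoint_left]
      intro x hx1 hx2
      have : x ∈ A ∩ B := Finset.mem_inter.2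
        ⟨(Finset.mem_filter.1 hx1).1, (Finset.mem_filter.1 hx2).1⟩
      rw [hne] at this
      exact absurd this (Finset.notMem_empty x)
    have hsub : A.filter (· ≤ nthEl A i) ∪ B.filter (· ≤ nthEl B j)
        ⊆ Finset.Icc 1 (i + j - 1) := by
      intro x hx
      rcases Finset.mem_union.1 hx with hx | hx
      · have h1 := Finset.mem_filter.1 hx
        have := Finset.mem_Icc.1 (hAsub h1.1)
        exact Finset.mem_Icc.2 ⟨this.1, by omega⟩
      · have h1 := Finset.mem_filter.1 hx
        have := Finset.mem_Icc.1 (hBsub h1.1)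
        exact Finset.mem_Icc.2 ⟨this.1, by omega⟩
    have hcard := Finset.card_le_card hsub
    rw [Finset.card_union_of_disjoint hdisj, hFA, hFB, Nat.card_Icc] at hcard
    omega
end

section
/- Let r ≥ 4, n ≥ 2r, and X = {2, 4, r+2}. Then |𝒜_{n,r,2}(X)| = C(n−2,r−2) + C(n−3,r−2) + 2·C(n−4,r−3) − C(n−5,r−4). -/
open Finset

lemma icc23 : (Finset.Icc 2 3 : Finset ℕ) = insert 2 {3} := by ext x; simp [Finset.mem_Icc]; omega

lemma sort_icc23 : (Finset.Icc 2 3 : Finset ℕ).sort (· ≤ ·) = [2, 3] := by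
  rw [icc23, Finset.sort_insert (· ≤ ·) (by simp) (by simp), Finset.sort_singleton]

lemma nthEl23_1 : nthEl (Finset.Icc 2 3) 1 = 2 := by simp [nthEl, sort_icc23]
lemma nthEl23_2 : nthEl (Finset.Icc 2 3) 2 = 3 := by simp [nthEl, sort_icc23]

lemma setPrec23 (A : Finset ℕ) :
    SetPrec A (Finset.Icc 2 3) ↔ 2 ≤ A.card ∧ nthEl A 1 ≤ 2 ∧ nthEl A 2 ≤ 3 := by
  unfold SetPrec
  rw [show (Finset.Icc 2 3 : Finset ℕ).card = 2 from by simp]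
  constructor
  · rintro ⟨h1, h2⟩
    exact ⟨h1, by simpa [nthEl23_1] using h2 1 (by simp),
      by simpa [nthEl23_2] using h2 2 (by simp)⟩
  · rintro ⟨h1, h2, h3⟩
    refine ⟨h1, fun i hi => ?_⟩
    simp only [Finset.mem_Icc] at hi
    obtain ⟨hi1, hi2⟩ := hi
    interval_cases i
    · simpa [nthEl23_1]
    · simpa [nthEl23_2]

lemma prec23_iff (A : Finset ℕ) (h2 : 2 ≤ A.card) (h0 : 0 ∉ A) :
    (nthEl A 1 ≤ 2 ∧ nthEl A 2 ≤ 3) ↔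
      ((1 ∈ A ∧ 2 ∈ A) ∨ (1 ∈ A ∧ 3 ∈ A) ∨ (2 ∈ A ∧ 3 ∈ A)) := by
  have hlen : (A.sort (· ≤ ·)).length = A.card := Finset.length_sort _
  have hsorted : List.Pairwise (· < ·) (A.sort (· ≤ ·)) := (Finset.sortedLT_sort A).pairwise
  have hmem : ∀ x, x ∈ A.sort (· ≤ ·) ↔ x ∈ A := fun x => Finset.mem_sort _
  rcases hl : A.sort (· ≤ ·) with _ | ⟨a, _ | ⟨b, t⟩⟩
  · rw [hl] at hlen; simp at hlen; omega
  · rw [hl] at hlen; simp at hlen; omega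
  · rw [hl] at hsorted hmem
    have hab : a < b := (List.pairwise_cons.mp hsorted).1 b (by simp)
    have hbt : ∀ x ∈ t, b < x := fun x hx =>
      (List.pairwise_cons.mp (List.pairwise_cons.mp hsorted).2).1 x hx
    have ha : a ∈ A := (hmem a).mp (by simp)
    have hb : b ∈ A := (hmem b).mp (by simp)
    have hamin : ∀ x ∈ A, a ≤ x := by
      intro x hx
      have hx' := (hmem x).mpr hx
      simp only [List.mem_cons] at hx'
      rcases hx' with h | h | h
      · omega
      · omega
      · exact le_of_lt (lt_trans hab (hbt x h))
    have hbmin : ∀ x ∈ A, x ≠ a → b ≤ x := by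
      intro x hx hxa
      have hx' := (hmem x).mpr hx
      simp only [List.mem_cons] at hx'
      rcases hx' with h | h | h
      · omega
      · omega
      · exact le_of_lt (hbt x h)
    have ha0 : a ≠ 0 := fun h => h0 (h ▸ ha)
    have hn1 : nthEl A 1 = a := by simp [nthEl, hl]
    have hn2 : nthEl A 2 = b := by simp [nthEl, hl]
    rw [hn1, hn2]
    constructor
    · rintro ⟨h1, h2⟩
      interval_cases a <;> interval_cases b <;> simp_all
    · rintro (⟨h1, h2⟩ | ⟨h1, h2⟩ | ⟨h1, h2⟩)
      · have := hamin 1 h1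
        have : b ≤ 2 := hbmin 2 h2 (by omega)
        omega
      · have := hamin 1 h1
        have : b ≤ 3 := hbmin 3 h2 (by omega)
        omega
      · have := hamin 2 h1
        have : b ≤ 3 := hbmin 3 h2 (by omega)
        omega

lemma mem_binomF {n r : ℕ} {A : Finset ℕ} :
    A ∈ binomF n r ↔ A ⊆ Finset.Icc 1 n ∧ A.card = r := by
  simp [binomF, Finset.mem_powersetCard]

lemma card_IO (n r : ℕ) (I O : Finset ℕ) (hI : I ⊆ Finset.Icc 1 n) (hd : Disjoint I O)
    (hIr : I.card ≤ r) :
    ((binomF n r).filter fun A => I ⊆ A ∧ Disjoint A O).card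
      = ((Finset.Icc 1 n) \ (I ∪ O)).card.choose (r - I.card) := by
  rw [← Finset.card_powersetCard]
  apply Finset.card_nbij' (fun A => A \ I) (fun B => B ∪ I)
  · intro A hA
    simp only [Finset.mem_coe, Finset.mem_filter, mem_binomF] at hA
    obtain ⟨⟨hsub, hcard⟩, hIA, hAO⟩ := hA
    rw [Finset.mem_coe, Finset.mem_powersetCard]
    constructor
    · intro x hx
      simp only [Finset.mem_sdiff, Finset.mem_union] at hx ⊢
      exact ⟨hsub hx.1, fun h => h.elim hx.2 (Finset.disjoint_left.mp hAO hx.1)⟩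
    · rw [Finset.card_sdiff_of_subset hIA, hcard]
  · intro B hB
    rw [Finset.mem_coe, Finset.mem_powersetCard] at hB
    obtain ⟨hsub, hcard⟩ := hB
    have hBI : Disjoint B I := by
      rw [Finset.disjoint_left]
      intro x hx hxI
      exact (Finset.mem_sdiff.mp (hsub hx)).2 (Finset.mem_union_left _ hxI)
    have hBO : Disjoint B O := by
      rw [Finset.disjoint_left]
      intro x hx hxO
      exact (Finset.mem_sdiff.mp (hsub hx)).2 (Finset.mem_union_right _ hxO)
    simp only [Finset.mem_coe, Finset.mem_filter, mem_binomF]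
    refine ⟨⟨?_, ?_⟩, Finset.subset_union_right, Finset.disjoint_union_left.mpr ⟨hBO, hd⟩⟩
    · exact Finset.union_subset (fun x hx => (Finset.mem_sdiff.mp (hsub hx)).1) hI
    · rw [Finset.card_union_of_disjoint hBI, hcard]
      omega
  · intro A hA
    simp only [Finset.mem_coe, Finset.mem_filter] at hA
    exact Finset.sdiff_union_of_subset hA.2.1
  · intro B hB
    rw [Finset.mem_coe, Finset.mem_powersetCard] at hB
    have hBI : Disjoint B I := by
      rw [Finset.disjoint_left]
      intro x hx hxI
      exact (Finset.mem_sdiff.mp (hB.1 hx)).2 (Finset.mem_union_left _ hxI)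
    show (B ∪ I) \ I = B
    rw [Finset.union_sdiff_cancel_right ?_]
    exact hBI

lemma mem_famX_Anrs2 (n r : ℕ) (A : Finset ℕ) :
    A ∈ famX (Anrs n r 2) ({2, 4, r + 2} : Finset ℕ) ↔
      A ∈ binomF n r ∧ SetPrec A (Finset.Icc 2 3) ∧ (A ∩ ({2, 4, r + 2} : Finset ℕ)).Nonempty := by
  have h23 : (2 * 2 - 1 : ℕ) = 3 := rfl
  simp only [famX, Anrs, genF, h23, Finset.mem_filter, Finset.mem_singleton, exists_eq_left,
    and_assoc]

lemma logic1 (P Q R S U : Prop) :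
    (True ∧ (P ∧ Q ∨ P ∧ R ∨ Q ∧ R)) ∧ (Q ∨ S ∨ U) ↔
      (P ∧ Q ∨ (Q ∧ R) ∧ ¬P) ∨ (P ∧ R) ∧ ¬Q ∧ (S ∨ U) := by
  tauto

lemma hsplit_full (n r : ℕ) (hr : 4 ≤ r) :
    famX (Anrs n r 2) ({2, 4, r + 2} : Finset ℕ) =
      ((binomF n r).filter (fun A => ({1, 2} : Finset ℕ) ⊆ A ∧ Disjoint A (∅ : Finset ℕ)))
      ∪ ((binomF n r).filter (fun A => ({2, 3} : Finset ℕ) ⊆ A ∧ Disjoint A ({1} : Finset ℕ)))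
      ∪ ((binomF n r).filter (fun A => ({1, 3} : Finset ℕ) ⊆ A ∧ Disjoint A ({2} : Finset ℕ)
          ∧ (4 ∈ A ∨ r + 2 ∈ A))) := by
  ext A
  rw [mem_famX_Anrs2 n r A]
  simp only [Finset.mem_union, Finset.mem_filter,
    Finset.insert_subset_iff, Finset.singleton_subset_iff,
    Finset.disjoint_singleton_right, Finset.disjoint_empty_right, and_true]
  by_cases hA : A ∈ binomF n r
  swap
  · simp [hA]
  have hA' := mem_binomF.mp hA
  have h0 : 0 ∉ A := fun h => by simpa using Finset.mem_Icc.mp (hA'.1 h)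
  have hcard2 : 2 ≤ A.card := by omega
  have hXiff : (A ∩ ({2, 4, r + 2} : Finset ℕ)).Nonempty ↔ (2 ∈ A ∨ 4 ∈ A ∨ r + 2 ∈ A) := by
    constructor
    · rintro ⟨x, hx⟩
      simp only [Finset.mem_inter, Finset.mem_insert, Finset.mem_singleton] at hx
      rcases hx.2 with h | h | h
      · exact Or.inl (h ▸ hx.1)
      · exact Or.inr (Or.inl (h ▸ hx.1))
      · exact Or.inr (Or.inr (h ▸ hx.1))
    · rintro (h | h | h)
      · exact ⟨2, by simp [h]⟩
      · exact ⟨4, by simp [h]⟩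
      · exact ⟨r + 2, by simp [h]⟩
  rw [hXiff, setPrec23]
  have hpp := prec23_iff A hcard2 h0
  simp only [hA, true_and]
  rw [hpp]
  have h2c : (2 ≤ A.card) = True := by simp [hcard2]
  rw [h2c]
  exact logic1 (1 ∈ A) (2 ∈ A) (3 ∈ A) (4 ∈ A) (r + 2 ∈ A)

/-- Lemma `l.countform`, case `t = 3`, `s = 2`: for `r ≥ 4`, `n ≥ 2r`
and `X = {2, 4, r+2}`,
`|𝒜_{n,r,2}(X)| = C(n−2,r−2) + C(n−3,r−2) + 2·C(n−4,r−3) − C(n−5,r−4)`. -/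
theorem count_Anr2 (n r : ℕ) (hr : 4 ≤ r) (hn : 2 * r ≤ n) :
    ((famX (Anrs n r 2) ({2, 4, r + 2} : Finset ℕ)).card : ℤ) =
      (Nat.choose (n - 2) (r - 2) : ℤ) + (Nat.choose (n - 3) (r - 2) : ℤ)
        + 2 * (Nat.choose (n - 4) (r - 3) : ℤ) - (Nat.choose (n - 5) (r - 4) : ℤ) := by
  have hc1 : ((binomF n r).filter
      (fun A => ({1, 2} : Finset ℕ) ⊆ A ∧ Disjoint A (∅ : Finset ℕ))).card
      = Nat.choose (n - 2) (r - 2) := by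
    rw [card_IO n r {1, 2} ∅ (by intro x hx; simp at hx; simp [Finset.mem_Icc]; omega)
      (Finset.disjoint_empty_right _) (by simp; omega)]
    congr 1
    · rw [Finset.card_sdiff_of_subset (by intro x hx; simp at hx; simp [Finset.mem_Icc] at hx ⊢; omega)]
      have : ({1, 2} ∪ ∅ : Finset ℕ).card = 2 := by decide
      simp only [Nat.card_Icc, this]
      omega
  have hc2 : ((binomF n r).filter
      (fun A => ({2, 3} : Finset ℕ) ⊆ A ∧ Disjoint A ({1} : Finset ℕ))).card
      = Nat.choose (n - 3) (r - 2) := by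
    rw [card_IO n r {2, 3} {1} (by intro x hx; simp at hx; simp [Finset.mem_Icc]; omega)
      (by simp) (by simp; omega)]
    congr 1
    · rw [Finset.card_sdiff_of_subset (by intro x hx; simp at hx; simp [Finset.mem_Icc] at hx ⊢; omega)]
      have : ({2, 3} ∪ {1} : Finset ℕ).card = 3 := by decide
      simp only [Nat.card_Icc, this]
      omega
  have hc3' : ((binomF n r).filter
      (fun A => ({1, 3} : Finset ℕ) ⊆ A ∧ Disjoint A ({2} : Finset ℕ))).card
      = Nat.choose (n - 3) (r - 2) := by
    rw [card_IO n r {1, 3} {2} (by intro x hx; simp at hx; simp [Finset.mem_Icc]; omega)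
      (by simp) (by simp; omega)]
    congr 1
    · rw [Finset.card_sdiff_of_subset (by intro x hx; simp at hx; simp [Finset.mem_Icc] at hx ⊢; omega)]
      have : ({1, 3} ∪ {2} : Finset ℕ).card = 3 := by decide
      simp only [Nat.card_Icc, this]
      omega
  have hc3'' : ((binomF n r).filter
      (fun A => ({1, 3} : Finset ℕ) ⊆ A ∧ Disjoint A ({2, 4, r + 2} : Finset ℕ))).card
      = Nat.choose (n - 5) (r - 2) := by
    rw [card_IO n r {1, 3} {2, 4, r + 2}
      (by intro x hx; simp at hx; simp [Finset.mem_Icc]; omega)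
      (by simp [Finset.disjoint_left]; omega) (by simp; omega)]
    congr 1
    · rw [Finset.card_sdiff_of_subset (by intro x hx; simp [Finset.mem_Icc] at hx ⊢; omega)]
      have hu : ({1, 3} ∪ {2, 4, r + 2} : Finset ℕ).card = 5 := by
        rw [show ({1, 3} ∪ {2, 4, r + 2} : Finset ℕ) = {1, 3, 2, 4, r + 2} from by
          ext x; simp; tauto]
        rw [Finset.card_insert_of_notMem
            (by simp only [Finset.mem_insert, Finset.mem_singleton]; omega),
          Finset.card_insert_of_notMem
            (by simp only [Finset.mem_insert, Finset.mem_singleton]; omega),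
          Finset.card_insert_of_notMem
            (by simp only [Finset.mem_insert, Finset.mem_singleton]; omega),
          Finset.card_insert_of_notMem
            (by simp only [Finset.mem_singleton]; omega), Finset.card_singleton]
      simp only [Nat.card_Icc, hu]
      omega
  have hsplit3 : ((binomF n r).filter
      (fun A => ({1, 3} : Finset ℕ) ⊆ A ∧ Disjoint A ({2} : Finset ℕ)))
      = ((binomF n r).filter (fun A => ({1, 3} : Finset ℕ) ⊆ A ∧ Disjoint A ({2} : Finset ℕ)
          ∧ (4 ∈ A ∨ r + 2 ∈ A)))
      ∪ ((binomF n r).filter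
          (fun A => ({1, 3} : Finset ℕ) ⊆ A ∧ Disjoint A ({2, 4, r + 2} : Finset ℕ))) := by
    ext A
    simp only [Finset.mem_union, Finset.mem_filter, Finset.disjoint_singleton_right,
      Finset.insert_subset_iff, Finset.singleton_subset_iff]
    rw [Finset.disjoint_right]
    constructor
    · rintro ⟨hA, h13, h2⟩
      by_cases h4 : 4 ∈ A ∨ r + 2 ∈ A
      · exact Or.inl ⟨hA, h13, h2, h4⟩
      · push_neg at h4
        refine Or.inr ⟨hA, h13, fun {x} hx => ?_⟩
        simp only [Finset.mem_insert, Finset.mem_singleton] at hx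
        rcases hx with rfl | rfl | rfl
        · exact h2
        · exact h4.1
        · exact h4.2
    · rintro (⟨hA, h13, h2, _⟩ | ⟨hA, h13, hd⟩)
      · exact ⟨hA, h13, h2⟩
      · exact ⟨hA, h13, hd (by simp)⟩
  have hdisj3 : Disjoint ((binomF n r).filter
        (fun A => ({1, 3} : Finset ℕ) ⊆ A ∧ Disjoint A ({2} : Finset ℕ)
          ∧ (4 ∈ A ∨ r + 2 ∈ A)))
      ((binomF n r).filter
        (fun A => ({1, 3} : Finset ℕ) ⊆ A ∧ Disjoint A ({2, 4, r + 2} : Finset ℕ))) := by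
    rw [Finset.disjoint_left]
    intro A hA hA'
    simp only [Finset.mem_filter] at hA hA'
    rw [Finset.disjoint_right] at hA'
    rcases hA.2.2.2 with h | h
    · exact hA'.2.2 (by simp) h
    · exact hA'.2.2 (by simp) h
  have hc3 : ((binomF n r).filter
        (fun A => ({1, 3} : Finset ℕ) ⊆ A ∧ Disjoint A ({2} : Finset ℕ)
          ∧ (4 ∈ A ∨ r + 2 ∈ A))).card + Nat.choose (n - 5) (r - 2)
      = Nat.choose (n - 3) (r - 2) := by
    rw [← hc3', ← hc3'', hsplit3, Finset.card_union_of_disjoint hdisj3]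
  have hd12 : Disjoint ((binomF n r).filter
        (fun A => ({1, 2} : Finset ℕ) ⊆ A ∧ Disjoint A (∅ : Finset ℕ)))
      ((binomF n r).filter
        (fun A => ({2, 3} : Finset ℕ) ⊆ A ∧ Disjoint A ({1} : Finset ℕ))) := by
    rw [Finset.disjoint_left]
    intro A hA hA'
    simp only [Finset.mem_filter, Finset.insert_subset_iff,
      Finset.disjoint_singleton_right] at hA hA'
    exact hA'.2.2 hA.2.1.1
  have hd13 : Disjoint (((binomF n r).filter
        (fun A => ({1, 2} : Finset ℕ) ⊆ A ∧ Disjoint A (∅ : Finset ℕ)))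
      ∪ ((binomF n r).filter
        (fun A => ({2, 3} : Finset ℕ) ⊆ A ∧ Disjoint A ({1} : Finset ℕ))))
      ((binomF n r).filter
        (fun A => ({1, 3} : Finset ℕ) ⊆ A ∧ Disjoint A ({2} : Finset ℕ)
          ∧ (4 ∈ A ∨ r + 2 ∈ A))) := by
    rw [Finset.disjoint_left]
    intro A hA hA'
    simp only [Finset.mem_union, Finset.mem_filter, Finset.insert_subset_iff,
      Finset.singleton_subset_iff, Finset.disjoint_singleton_right] at hA hA'
    rcases hA with ⟨_, ⟨_, h2⟩, _⟩ | ⟨_, ⟨h2, _⟩, _⟩ <;> exact hA'.2.2.1 h2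
  have hcard : (famX (Anrs n r 2) ({2, 4, r + 2} : Finset ℕ)).card
      = Nat.choose (n - 2) (r - 2) + Nat.choose (n - 3) (r - 2)
        + ((binomF n r).filter
          (fun A => ({1, 3} : Finset ℕ) ⊆ A ∧ Disjoint A ({2} : Finset ℕ)
            ∧ (4 ∈ A ∨ r + 2 ∈ A))).card := by
    rw [hsplit_full n r hr, Finset.card_union_of_disjoint hd13,
      Finset.card_union_of_disjoint hd12, hc1, hc2]
  obtain ⟨s, rfl⟩ : ∃ s, r = s + 4 := ⟨r - 4, by omega⟩
  obtain ⟨m, rfl⟩ : ∃ m, n = m + 5 := ⟨n - 5, by omega⟩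
  have e2 : m + 5 - 2 = m + 3 := by omega
  have e3 : m + 5 - 3 = m + 2 := by omega
  have e4 : m + 5 - 4 = m + 1 := by omega
  have e5 : m + 5 - 5 = m := by omega
  have f2 : s + 4 - 2 = s + 2 := by omega
  have f3 : s + 4 - 3 = s + 1 := by omega
  have f4 : s + 4 - 4 = s := by omega
  rw [hcard, e2, e3, e4, e5, f2, f3, f4]
  rw [e3, e5, f2] at hc3
  have p1 : Nat.choose (m + 3) (s + 2) = Nat.choose (m + 2) (s + 1) + Nat.choose (m + 2) (s + 2) :=
    Nat.choose_succ_succ (m + 2) (s + 1)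
  have p2 : Nat.choose (m + 2) (s + 2) = Nat.choose (m + 1) (s + 1) + Nat.choose (m + 1) (s + 2) :=
    Nat.choose_succ_succ (m + 1) (s + 1)
  have p4 : Nat.choose (m + 1) (s + 2) = Nat.choose m (s + 1) + Nat.choose m (s + 2) :=
    Nat.choose_succ_succ m (s + 1)
  have p5 : Nat.choose (m + 1) (s + 1) = Nat.choose m s + Nat.choose m (s + 1) :=
    Nat.choose_succ_succ m s
  push_cast
  omega
end

section
/- Let r ≥ 4, n ≥ 2r, 2 ≤ s ≤ r, and let X be one of {r+2} (with t=1), {4,r+2} (with t=2), {2,4,r+2} (with t=3), or {2,3,…,t}∪{r+2} with 4 ≤ t ≤ r, where t = |X|. Assume it is not the case that both s ∈ {2,3} and t ∈ {2,3}. Then |𝒜_{n,r,s}(X)| = Σ_{i=s}^{2s−1} (C(i−1,s−1) − C(i−t,s−1))·C(n−i,r−s) + Σ_{i=s}^{min{r+1,2s−1}} C(i−t,s−1)·C(n−i−1,r−s−1) + E, where E = C(r+2−t,s−1)·C(n−r−2,r−s) + Σ_{i=r+3}^{2s−1} C(i−t−1,s−2)·C(n−i,r−s) if 2s−1 ≥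 r+2, and E = 0 otherwise. -/
open Finset

/-- The set `X` of Lemma `l.countform`, parametrized by `t = |X|`:
`{r+2}` for `t = 1`, `{4, r+2}` for `t = 2`, `{2, 4, r+2}` for `t = 3`, and
`{2, 3, …, t} ∪ {r+2}` for `t ≥ 4`. -/
def Xset (r t : ℕ) : Finset ℕ :=
  if t = 1 then {r + 2}
  else if t = 2 then {4, r + 2}
  else if t = 3 then {2, 4, r + 2}
  else Finset.Icc 2 t ∪ {r + 2}

lemma card_filter_eq_length_filter (A : Finset ℕ) (p : ℕ → Prop) [DecidablePred p] :
    (A.filter p).card = ((A.sort (·≤·)).filter (fun a => p a)).length := by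
  have h : (A.sort (·≤·) : Multiset ℕ) = A.val := Finset.sort_eq _ _
  have h2 : (A.filter p).card = Multiset.card (Multiset.filter p A.val) := by
    rw [Finset.card, Finset.filter_val]
  rw [h2, ← h, Multiset.filter_coe, Multiset.coe_card]

lemma filter_lt_getElem {l : List ℕ} (hl : List.Pairwise (· < ·) l) {j : ℕ} (hj : j < l.length) :
    (l.filter (fun a => a < l[j])).length = j := by
  have hp := List.pairwise_iff_getElem.mp hl
  obtain ⟨c, hc⟩ : ∃ c, l[j] = c := ⟨_, rfl⟩
  rw [hc]
  have h2 : (l.take j).filter (fun a => a < c) = l.take j := by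
    rw [List.filter_eq_self]
    intro x hx
    obtain ⟨m, hm, rfl⟩ := List.mem_iff_getElem.mp hx
    have hm' : m < j := by simpa using lt_of_lt_of_le hm (by simp)
    have ht : (l.take j)[m] = l[m] := List.getElem_take
    rw [ht, ← hc]
    exact decide_eq_true (hp m j (by omega) hj (by omega))
  have h3 : (l.drop j).filter (fun a => a < c) = [] := by
    rw [List.filter_eq_nil_iff]
    intro x hx
    obtain ⟨m, hm, rfl⟩ := List.mem_iff_getElem.mp hx
    have hlen : m < l.length - j := by simpa using hm
    have ht : (l.drop j)[m] = l[j + m] := List.getElem_drop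
    rw [ht, ← hc]
    simp only [decide_eq_true_eq]
    rcases Nat.eq_zero_or_pos m with h0 | h0
    · subst h0; simp
    · have := hp j (j + m) (by omega) (by omega) (by omega)
      omega
  conv_lhs => rw [← List.take_append_drop j l]
  rw [List.filter_append, h2, h3]
  simp [List.length_take]
  omega

lemma nthEl_eq_getElem {A : Finset ℕ} {k : ℕ} (hk1 : 1 ≤ k) (hk : k ≤ A.card) :
    nthEl A k = (A.sort (·≤·))[k-1]'(by rw [Finset.length_sort]; omega) := by
  unfold nthEl
  rw [List.getD_eq_getElem]

lemma nthEl_gap {A : Finset ℕ} {j k : ℕ} (hj : 1 ≤ j) (hjk : j ≤ k) (hk : k ≤ A.card) :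
    nthEl A j + (k - j) ≤ nthEl A k := by
  have hp := List.pairwise_iff_getElem.mp ((Finset.sortedLT_sort A).pairwise)
  have hlen : (A.sort (·≤·)).length = A.card := Finset.length_sort _
  rw [nthEl_eq_getElem hj (le_trans hjk hk), nthEl_eq_getElem (le_trans hj hjk) hk]
  have key : ∀ d a (ha : a + d < A.card),
      (A.sort (·≤·))[a]'(by omega) + d ≤ (A.sort (·≤·))[a+d]'(by omega) := by
    intro d
    induction d with
    | zero => intro a ha; simp
    | succ d ih =>
      intro a ha
      have h1 := ih a (by omega)
      have h2 := hp (a+d) (a+(d+1)) (by omega) (by omega) (by omega)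
      omega
  have := key (k - j) (j - 1) (by omega)
  convert this using 2
  omega

lemma nthEl_mem_s12 {A : Finset ℕ} {k : ℕ} (hk1 : 1 ≤ k) (hk : k ≤ A.card) : nthEl A k ∈ A := by
  rw [nthEl_eq_getElem hk1 hk]
  rw [← Finset.mem_sort (α := ℕ) (·≤·)]
  exact List.getElem_mem _

lemma nthEl_eq_iff {A : Finset ℕ} {k i : ℕ} (hk1 : 1 ≤ k) (hk : k ≤ A.card) :
    nthEl A k = i ↔ i ∈ A ∧ (A.filter (· < i)).card = k - 1 := by
  have hlen : (A.sort (·≤·)).length = A.card := Finset.length_sort _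
  constructor
  · rintro rfl
    refine ⟨nthEl_mem_s12 hk1 hk, ?_⟩
    rw [nthEl_eq_getElem hk1 hk, card_filter_eq_length_filter]
    exact filter_lt_getElem ((Finset.sortedLT_sort A).pairwise) (by omega)
  · rintro ⟨hmem, hcard⟩
    rw [← Finset.mem_sort (α := ℕ) (·≤·)] at hmem
    obtain ⟨m, hm, rfl⟩ := List.mem_iff_getElem.mp hmem
    have h1 : (A.filter (· < (A.sort (·≤·))[m])).card = m := by
      rw [card_filter_eq_length_filter]
      exact filter_lt_getElem ((Finset.sortedLT_sort A).pairwise) hm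
    have : m = k - 1 := by omega
    rw [nthEl_eq_getElem hk1 hk]
    congr 1
    omega

lemma count_fiber (n r s i : ℕ) (Z : Finset ℕ) (h1i : 1 ≤ i) (hin : i ≤ n)
    (hs1 : 1 ≤ s) (hsr : s ≤ r) (hiZ : i ∉ Z) :
    ((binomF n r).filter (fun A => nthEl A s = i ∧ A ∩ Z = ∅)).card
      = Nat.choose ((Icc 1 (i-1) \ Z).card) (s-1) * Nat.choose ((Icc (i+1) n \ Z).card) (r-s) := by
  rw [← Finset.card_powersetCard (s-1) (Icc 1 (i-1) \ Z),
      ← Finset.card_powersetCard (r-s) (Icc (i+1) n \ Z), ← Finset.card_product]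
  refine Finset.card_bij' (fun A _ => (A.filter (· < i), A.filter (fun a => i < a)))
    (fun p _ => p.1 ∪ insert i p.2) ?hi ?hj ?hij ?hji
  case hi => -- forward maps into product
    intro A hA
    simp only [Finset.mem_filter, binomF, Finset.mem_powersetCard] at hA
    obtain ⟨⟨hsub, hcard⟩, hnth, hZ⟩ := hA
    have hchar := (nthEl_eq_iff hs1 (by omega)).mp hnth
    obtain ⟨hiA, hflt⟩ := hchar
    have hZ' : ∀ x ∈ A, x ∉ Z := by
      intro x hx hxZ
      exact Finset.notMem_empty x (hZ ▸ Finset.mem_inter.mpr ⟨hx, hxZ⟩)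
    have hge : ∀ x ∈ A, 1 ≤ x ∧ x ≤ n := by
      intro x hx; have := hsub hx; simp [Finset.mem_Icc] at this; exact this
    have hcard2 : (A.filter (fun a => ¬ a < i)).card = r - (s-1) := by
      have := Finset.card_filter_add_card_filter_not (s := A) (p := (· < i))
      omega
    have hins : A.filter (fun a => ¬ a < i) = insert i (A.filter (fun a => i < a)) := by
      ext x
      simp only [Finset.mem_filter, Finset.mem_insert]
      constructor
      · rintro ⟨hx, hxi⟩
        rcases Nat.eq_or_lt_of_le (Nat.le_of_not_lt hxi) with h | h
        · exact Or.inl h.symm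
        · exact Or.inr ⟨hx, h⟩
      · rintro (rfl | ⟨hx, hxi⟩)
        · exact ⟨hiA, by omega⟩
        · exact ⟨hx, by omega⟩
    have hnotmem : i ∉ A.filter (fun a => i < a) := by simp
    have hcard3 : (A.filter (fun a => i < a)).card = r - s := by
      rw [hins, Finset.card_insert_of_notMem hnotmem] at hcard2
      omega
    simp only [Finset.mem_product, Finset.mem_powersetCard]
    refine ⟨⟨?_, hflt⟩, ?_, hcard3⟩
    · intro x hx
      simp only [Finset.mem_filter] at hx
      simp only [Finset.mem_sdiff, Finset.mem_Icc]
      exact ⟨⟨(hge x hx.1).1, by omega⟩, hZ' x hx.1⟩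
    · intro x hx
      simp only [Finset.mem_filter] at hx
      simp only [Finset.mem_sdiff, Finset.mem_Icc]
      exact ⟨⟨by omega, (hge x hx.1).2⟩, hZ' x hx.1⟩
  case hj => -- backward maps into LHS
    intro p hp
    simp only [Finset.mem_product, Finset.mem_powersetCard] at hp
    obtain ⟨⟨hL, hLc⟩, hU, hUc⟩ := hp
    have hLb : ∀ x ∈ p.1, (1 ≤ x ∧ x ≤ i-1) ∧ x ∉ Z := by
      intro x hx; have := hL hx; simpa [Finset.mem_sdiff, Finset.mem_Icc] using this
    have hUb : ∀ x ∈ p.2, (i+1 ≤ x ∧ x ≤ n) ∧ x ∉ Z := by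
      intro x hx; have := hU hx; simpa [Finset.mem_sdiff, Finset.mem_Icc] using this
    have hiU : i ∉ p.2 := fun h => by have := (hUb i h).1; omega
    have hLiU : Disjoint p.1 (insert i p.2) := by
      rw [Finset.disjoint_left]
      intro x hx hmem
      have h1 := (hLb x hx).1
      simp only [Finset.mem_insert] at hmem
      rcases hmem with rfl | h
      · omega
      · have := (hUb x h).1; omega
    have hfilt : (p.1 ∪ insert i p.2).filter (· < i) = p.1 := by
      ext x
      simp only [Finset.mem_filter, Finset.mem_union, Finset.mem_insert]
      constructor
      · rintro ⟨hx | (rfl | hx), hlt⟩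
        · exact hx
        · omega
        · have := (hUb x hx).1; omega
      · intro hx
        exact ⟨Or.inl hx, by have := (hLb x hx).1; omega⟩
    have hmemi : i ∈ p.1 ∪ insert i p.2 := by simp
    have hcardU : (p.1 ∪ insert i p.2).card = r := by
      rw [Finset.card_union_of_disjoint hLiU, Finset.card_insert_of_notMem hiU]
      omega
    simp only [Finset.mem_filter, binomF, Finset.mem_powersetCard]
    refine ⟨⟨?_, hcardU⟩, ?_, ?_⟩
    · intro x hx
      simp only [Finset.mem_union, Finset.mem_insert] at hx
      simp only [Finset.mem_Icc]
      rcases hx with hx | (rfl | hx)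
      · have := (hLb x hx).1; omega
      · omega
      · have := (hUb x hx).1; omega
    · rw [nthEl_eq_iff hs1 (by omega), hfilt]
      exact ⟨hmemi, hLc⟩
    · rw [Finset.eq_empty_iff_forall_notMem]
      intro x hx
      simp only [Finset.mem_inter, Finset.mem_union, Finset.mem_insert] at hx
      rcases hx with ⟨hx | (rfl | hx), hxZ⟩
      · exact (hLb x hx).2 hxZ
      · exact hiZ hxZ
      · exact (hUb x hx).2 hxZ
  case hij => -- left inverse
    intro A hA
    simp only [Finset.mem_filter, binomF, Finset.mem_powersetCard] at hA
    obtain ⟨⟨hsub, hcard⟩, hnth, hZ⟩ := hA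
    have hiA : i ∈ A := ((nthEl_eq_iff hs1 (by omega)).mp hnth).1
    ext x
    simp only [Finset.mem_union, Finset.mem_insert, Finset.mem_filter]
    constructor
    · rintro (⟨hx, _⟩ | (rfl | ⟨hx, _⟩)) <;> first | exact hx | exact hiA
    · intro hx
      rcases Nat.lt_trichotomy x i with h | rfl | h
      · exact Or.inl ⟨hx, h⟩
      · exact Or.inr (Or.inl rfl)
      · exact Or.inr (Or.inr ⟨hx, h⟩)
  case hji => -- right inverse
    intro p hp
    simp only [Finset.mem_product, Finset.mem_powersetCard] at hp
    obtain ⟨⟨hL, _⟩, hU, _⟩ := hp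
    have hLb : ∀ x ∈ p.1, 1 ≤ x ∧ x ≤ i-1 := by
      intro x hx; have := hL hx; simp [Finset.mem_sdiff, Finset.mem_Icc] at this; omega
    have hUb : ∀ x ∈ p.2, i+1 ≤ x ∧ x ≤ n := by
      intro x hx; have := hU hx; simp [Finset.mem_sdiff, Finset.mem_Icc] at this; omega
    have e1 : (p.1 ∪ insert i p.2).filter (· < i) = p.1 := by
      ext x
      simp only [Finset.mem_filter, Finset.mem_union, Finset.mem_insert]
      constructor
      · rintro ⟨hx | (rfl | hx), hlt⟩
        · exact hx
        · omega
        · have := hUb x hx; omega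
      · intro hx; exact ⟨Or.inl hx, by have := hLb x hx; omega⟩
    have e2 : (p.1 ∪ insert i p.2).filter (fun a => i < a) = p.2 := by
      ext x
      simp only [Finset.mem_filter, Finset.mem_union, Finset.mem_insert]
      constructor
      · rintro ⟨hx | (rfl | hx), hlt⟩
        · have := hLb x hx; omega
        · omega
        · exact hx
      · intro hx; exact ⟨Or.inr (Or.inr hx), by have := hUb x hx; omega⟩
    show ((p.1 ∪ insert i p.2).filter (· < i), (p.1 ∪ insert i p.2).filter (fun a => i < a)) = p
    rw [e1, e2]

lemma card_sdiff_inter (P Z : Finset ℕ) : (P \ Z).card = P.card - (P ∩ Z).card := by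
  rw [← Finset.sdiff_inter_self_left]
  exact Finset.card_sdiff_of_subset Finset.inter_subset_left

lemma mem_Xset_iff {r t x : ℕ} (ht1 : 1 ≤ t) :
    x ∈ Xset r t ↔ (x = r + 2 ∨ (t = 2 ∧ x = 4) ∨ (t = 3 ∧ (x = 2 ∨ x = 4)) ∨
      (4 ≤ t ∧ 2 ≤ x ∧ x ≤ t)) := by
  unfold Xset
  split_ifs with h1 h2 h3 <;> simp [Finset.mem_Icc] <;> omega

lemma card_Xset {r t : ℕ} (hr : 4 ≤ r) (ht1 : 1 ≤ t) (htr : t ≤ r) : (Xset r t).card = t := by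
  unfold Xset
  split_ifs with h1 h2 h3
  · simp [h1]
  · rw [show ({4, r+2} : Finset ℕ) = insert 4 {r+2} from rfl,
      Finset.card_insert_of_notMem (by simp; omega), Finset.card_singleton]
    omega
  · rw [show ({2, 4, r+2} : Finset ℕ) = insert 2 (insert 4 {r+2}) from rfl,
      Finset.card_insert_of_notMem (by simp; omega),
      Finset.card_insert_of_notMem (by simp; omega), Finset.card_singleton]
    omega
  · rw [Finset.card_union_of_disjoint (by simp [Finset.disjoint_left, Finset.mem_Icc]; omega),
      Nat.card_Icc, Finset.card_singleton]
    omega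

lemma inter_low {r t i : ℕ} (hr : 4 ≤ r) (ht1 : 1 ≤ t) (htr : t ≤ r) (hti : t < i)
    (h23 : (t = 2 ∨ t = 3) → 5 ≤ i) (hir : i ≤ r + 1) :
    (Icc 1 (i-1) ∩ Xset r t).card = t - 1 := by
  unfold Xset
  split_ifs with h1 h2 h3
  · rw [show Icc 1 (i-1) ∩ {r+2} = ∅ from by ext x; simp [Finset.mem_Icc]; omega]
    simp; omega
  · rw [show Icc 1 (i-1) ∩ {4, r+2} = {4} from by
      ext x; simp [Finset.mem_Icc]; omega]
    simp; omega
  · rw [show Icc 1 (i-1) ∩ {2, 4, r+2} = {2, 4} from by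
      ext x; simp [Finset.mem_Icc]; omega]
    rw [show ({2,4} : Finset ℕ) = insert 2 {4} from rfl,
      Finset.card_insert_of_notMem (by simp), Finset.card_singleton]
    omega
  · rw [show Icc 1 (i-1) ∩ (Icc 2 t ∪ {r+2}) = Icc 2 t from by
      ext x; simp [Finset.mem_Icc]; omega]
    rw [Nat.card_Icc]; omega

lemma inter_high_low {r t i : ℕ} (hr : 4 ≤ r) (ht1 : 1 ≤ t) (htr : t ≤ r) (hi : r + 3 ≤ i) :
    (Icc 1 (i-1) ∩ Xset r t).card = t := by
  rw [Finset.inter_eq_right.mpr, card_Xset hr ht1 htr]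
  intro x hx
  rw [mem_Xset_iff ht1] at hx
  simp [Finset.mem_Icc]
  omega

lemma inter_up_low {r t i n : ℕ} (hr : 4 ≤ r) (ht1 : 1 ≤ t) (htr : t ≤ r) (hti : t < i)
    (h23 : (t = 2 ∨ t = 3) → 5 ≤ i) (hir : i ≤ r + 1) (hn : r + 2 ≤ n) :
    (Icc (i+1) n ∩ Xset r t).card = 1 := by
  rw [show Icc (i+1) n ∩ Xset r t = {r+2} from ?_, Finset.card_singleton]
  ext x
  simp only [Finset.mem_inter, Finset.mem_Icc, mem_Xset_iff ht1, Finset.mem_singleton]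
  omega

lemma inter_up_high {r t i n : ℕ} (hr : 4 ≤ r) (ht1 : 1 ≤ t) (htr : t ≤ r) (hi : r + 3 ≤ i) :
    (Icc (i+1) n ∩ Xset r t).card = 0 := by
  rw [Finset.card_eq_zero]
  ext x
  simp only [Finset.mem_inter, Finset.mem_Icc, mem_Xset_iff ht1, Finset.notMem_empty, iff_false,
    not_and]
  intro h
  omega

lemma fib_eq (n r s t i : ℕ) (hr : 4 ≤ r) (hn : 2*r ≤ n) (hs2 : 2 ≤ s) (hsr : s ≤ r)
    (ht1 : 1 ≤ t) (htr : t ≤ r)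
    (hexc : ¬((s = 2 ∨ s = 3) ∧ (t = 2 ∨ t = 3))) (hi : s ≤ i) (hi2 : i ≤ 2*s - 1) :
    ((binomF n r).filter (fun A => nthEl A s = i ∧ (A ∩ Xset r t).Nonempty)).card
    = if i ≤ r + 1 then
        (i-1).choose (s-1) * (n-i).choose (r-s) - (i-t).choose (s-1) * (n-i-1).choose (r-s)
      else if i = r + 2 then (i-1).choose (s-1) * (n-i).choose (r-s)
      else (i-1).choose (s-1) * (n-i).choose (r-s) - (i-t-1).choose (s-1) * (n-i).choose (r-s) := by
  have h1i : 1 ≤ i := by omega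
  have hin : i ≤ n := by omega
  have hcardA : ∀ A ∈ binomF n r, A.card = r := by
    intro A hA; exact (Finset.mem_powersetCard.mp hA).2
  -- total count with nthEl A s = i
  have hG : ((binomF n r).filter (fun A => nthEl A s = i)).card
      = (i-1).choose (s-1) * (n-i).choose (r-s) := by
    have h0 := count_fiber n r s i ∅ h1i hin (by omega) hsr (by simp)
    simp only [Finset.sdiff_empty] at h0
    rw [Nat.card_Icc, Nat.card_Icc] at h0
    rw [show i-1+1-1 = i-1 from by omega, show n+1-(i+1) = n-i from by omega] at h0
    rw [← h0]
    congr 1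
    apply Finset.filter_congr
    intro A _
    simp
  -- split into intersecting / non-intersecting
  have hsum := Finset.card_filter_add_card_filter_not
    (s := (binomF n r).filter (fun A => nthEl A s = i))
    (p := fun A => (A ∩ Xset r t).Nonempty)
  rw [Finset.filter_filter, Finset.filter_filter] at hsum
  have hcongr : (binomF n r).filter (fun A => nthEl A s = i ∧ ¬(A ∩ Xset r t).Nonempty)
      = (binomF n r).filter (fun A => nthEl A s = i ∧ A ∩ Xset r t = ∅) := by
    apply Finset.filter_congr
    intro A _
    rw [Finset.not_nonempty_iff_eq_empty]
  rw [hcongr, hG] at hsum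
  by_cases hiX : i ∈ Xset r t
  · -- fiber of empty-intersection is empty
    have hE : (binomF n r).filter (fun A => nthEl A s = i ∧ A ∩ Xset r t = ∅) = ∅ := by
      rw [Finset.eq_empty_iff_forall_notMem]
      intro A hA
      rw [Finset.mem_filter] at hA
      obtain ⟨hAb, hnth, hempty⟩ := hA
      have hiA : i ∈ A := ((nthEl_eq_iff (by omega) (by rw [hcardA A hAb]; omega)).mp hnth).1
      have : i ∈ A ∩ Xset r t := Finset.mem_inter.mpr ⟨hiA, hiX⟩
      rw [hempty] at this
      exact Finset.notMem_empty i this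
    rw [hE, Finset.card_empty] at hsum
    -- i ∈ X: either i = r+2, or i ≤ r+1 with vanishing choose
    rw [mem_Xset_iff ht1] at hiX
    rcases hiX with h | h | h | h
    · -- i = r+2
      have : ¬ (i ≤ r+1) := by omega
      rw [if_neg this, if_pos h]
      omega
    · -- t = 2, i = 4, s ≥ 4
      have hs4 : 4 ≤ s := by omega
      rw [if_pos (by omega)]
      rw [show i - t = 2 from by omega, Nat.choose_eq_zero_of_lt (show 2 < s - 1 by omega)]
      omega
    · -- t = 3, i ∈ {2,4}, s ≥ 4 so i = 4
      have hs4 : 4 ≤ s := by omega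
      have hi4 : i = 4 := by omega
      rw [if_pos (by omega)]
      rw [show i - t = 1 from by omega, Nat.choose_eq_zero_of_lt (show 1 < s - 1 by omega)]
      omega
    · -- t ≥ 4, 2 ≤ i ≤ t
      rw [if_pos (by omega)]
      rw [show i - t = 0 from by omega, Nat.choose_eq_zero_of_lt (show 0 < s - 1 by omega)]
      omega
  · -- i ∉ X
    have hH := count_fiber n r s i (Xset r t) h1i hin (by omega) hsr hiX
    rw [card_sdiff_inter, card_sdiff_inter, Nat.card_Icc, Nat.card_Icc] at hH
    by_cases hlow : i ≤ r + 1
    · -- low case: derive t < i and the 5 ≤ i condition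
      have hti : t < i := by
        by_contra hc
        push_neg at hc
        apply hiX
        rw [mem_Xset_iff ht1]
        rcases Nat.lt_or_ge t 4 with h4 | h4
        · -- t ≤ 3: t=1 gives i ≤ 1 < s contradiction; t=2,3 need s ≥ 4
          interval_cases t
          · omega
          · omega
          · omega
        · right; right; right; exact ⟨h4, by omega, hc⟩
      have h23 : (t = 2 ∨ t = 3) → 5 ≤ i := by
        intro h23'
        have hs4 : 4 ≤ s := by omega
        have : i ≠ 4 := by
          intro h4
          apply hiX
          rw [mem_Xset_iff ht1]
          omega
        omega
      rw [inter_low hr ht1 htr hti h23 hlow, inter_up_low hr ht1 htr hti h23 hlow (by omega)] at hH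
      rw [show i-1+1-1 - (t-1) = i - t from by omega, show n+1-(i+1) - 1 = n-i-1 from by omega] at hH
      rw [if_pos hlow]
      omega
    · -- high case: i ≥ r+3 since i ≠ r+2 (i ∉ X)
      have hhigh : r + 3 ≤ i := by
        have : i ≠ r + 2 := by
          intro h
          apply hiX
          rw [mem_Xset_iff ht1]
          omega
        omega
      rw [inter_high_low hr ht1 htr hhigh, inter_up_high hr ht1 htr hhigh] at hH
      rw [show i-1+1-1 - t = i-t-1 from by omega, show n+1-(i+1) - 0 = n-i from by omega] at hH
      rw [if_neg hlow, if_neg (by omega)]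
      omega


lemma nthEl_Icc {a b j : ℕ} (hj1 : 1 ≤ j) (hj : j ≤ b + 1 - a) (hab : a ≤ b) (ha : 1 ≤ a) :
    nthEl (Finset.Icc a b) j = a + j - 1 := by
  have hcard : (Finset.Icc a b).card = b + 1 - a := Nat.card_Icc a b
  rw [nthEl_eq_iff hj1 (by omega)]
  constructor
  · simp only [Finset.mem_Icc]; omega
  · rw [show (Finset.Icc a b).filter (· < a + j - 1) = Finset.Icc a (a + j - 2) from by
      ext x; simp only [Finset.mem_filter, Finset.mem_Icc]; omega]
    rw [Nat.card_Icc]; omega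

lemma setPrec_iff {r s : ℕ} {A : Finset ℕ} (hA : A.card = r) (hs1 : 1 ≤ s) (hsr : s ≤ r) :
    SetPrec A (Finset.Icc s (2 * s - 1)) ↔ nthEl A s ≤ 2 * s - 1 := by
  have hC : (Finset.Icc s (2 * s - 1)).card = s := by rw [Nat.card_Icc]; omega
  unfold SetPrec
  rw [hC]
  constructor
  · rintro ⟨-, h⟩
    have h2 := h s (by simp only [Finset.mem_Icc]; omega)
    rw [nthEl_Icc hs1 (by omega) (by omega) hs1] at h2
    omega
  · intro h
    refine ⟨by omega, ?_⟩
    intro j hj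
    simp only [Finset.mem_Icc] at hj
    rw [nthEl_Icc hj.1 (by omega) (by omega) hs1]
    have hg := nthEl_gap hj.1 hj.2 (show s ≤ A.card by omega)
    omega

lemma nthEl_lower {n r s : ℕ} {A : Finset ℕ} (hA : A ∈ binomF n r) (hs1 : 1 ≤ s)
    (hsr : s ≤ r) : s ≤ nthEl A s := by
  obtain ⟨hsub, hcard⟩ := Finset.mem_powersetCard.mp hA
  have h1 : nthEl A 1 ∈ A := nthEl_mem_s12 le_rfl (by omega)
  have h1' : 1 ≤ nthEl A 1 := by
    have := hsub h1; simp only [Finset.mem_Icc] at this; omega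
  have hg := nthEl_gap le_rfl hs1 (show s ≤ A.card by omega)
  omega

lemma arith1 (x y a b : ℕ) (hyx : y ≤ x) : x * (a + b) - y * b = (x - y) * (a + b) + y * a := by
  have h1 : y * b ≤ x * (a + b) := Nat.mul_le_mul hyx (by omega)
  zify [h1, hyx]
  ring

lemma arith2 (x y c : ℕ) (hyx : y ≤ x) : x * c = (x - y) * c + y * c := by
  rw [← Nat.add_mul, Nat.sub_add_cancel hyx]

lemma arith3 (x z w c : ℕ) (h : w + z ≤ x) :
    x * c - z * c = (x - (w + z)) * c + w * c := by
  have h1 : z * c ≤ x * c := Nat.mul_le_mul_right c (by omega)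
  zify [h1, h]
  ring

/-- Lemma `l.countform`, general case: for `r ≥ 4`, `n ≥ 2r`,
`2 ≤ s ≤ r`, `1 ≤ t ≤ r`, and not both `s ∈ {2,3}` and `t ∈ {2,3}`,
`|𝒜_{n,r,s}(X)|` is given by the stated binomial formula.
(If-guards encode the convention that binomial coefficients with negative
lower index vanish, and that the third group of terms appears only when `2s−1 ≥ r+2`.) -/
theorem count_Anrs_general (n r s t : ℕ) (hr : 4 ≤ r) (hn : 2 * r ≤ n)
    (hs2 : 2 ≤ s) (hsr : s ≤ r) (ht1 : 1 ≤ t) (htr : t ≤ r)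
    (hexc : ¬((s = 2 ∨ s = 3) ∧ (t = 2 ∨ t = 3))) :
    (famX (Anrs n r s) (Xset r t)).card =
      (∑ i ∈ Finset.Icc s (2 * s - 1),
        (Nat.choose (i - 1) (s - 1) - Nat.choose (i - t) (s - 1)) * Nat.choose (n - i) (r - s))
      + (if s < r then
          ∑ i ∈ Finset.Icc s (min (r + 1) (2 * s - 1)),
            Nat.choose (i - t) (s - 1) * Nat.choose (n - i - 1) (r - s - 1)
         else 0)
      + (if r + 2 ≤ 2 * s - 1 then
          Nat.choose (r + 2 - t) (s - 1) * Nat.choose (n - r - 2) (r - s)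
          + ∑ i ∈ Finset.Icc (r + 3) (2 * s - 1),
              Nat.choose (i - t - 1) (s - 2) * Nat.choose (n - i) (r - s)
         else 0) := by
  have hs1 : 1 ≤ s := by omega
  have hfam : famX (Anrs n r s) (Xset r t)
      = (binomF n r).filter (fun A => nthEl A s ≤ 2 * s - 1 ∧ (A ∩ Xset r t).Nonempty) := by
    unfold famX Anrs genF
    rw [Finset.filter_filter]
    apply Finset.filter_congr
    intro A hA
    have hcard : A.card = r := (Finset.mem_powersetCard.mp hA).2
    simp only [Finset.mem_singleton, exists_eq_left]
    rw [setPrec_iff hcard hs1 hsr]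
  have hmaps : ∀ A ∈ (binomF n r).filter
      (fun A => nthEl A s ≤ 2 * s - 1 ∧ (A ∩ Xset r t).Nonempty),
      nthEl A s ∈ Finset.Icc s (2 * s - 1) := by
    intro A hA
    rw [Finset.mem_filter] at hA
    have := nthEl_lower hA.1 hs1 hsr
    simp only [Finset.mem_Icc]
    exact ⟨this, hA.2.1⟩
  rw [hfam, Finset.card_eq_sum_card_fiberwise hmaps]
  have hfib : ∀ i ∈ Finset.Icc s (2 * s - 1),
      (((binomF n r).filter
          (fun A => nthEl A s ≤ 2 * s - 1 ∧ (A ∩ Xset r t).Nonempty)).filter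
        (fun A => nthEl A s = i)).card
      = (if i ≤ r + 1 then
          (i-1).choose (s-1) * (n-i).choose (r-s) - (i-t).choose (s-1) * (n-i-1).choose (r-s)
        else if i = r + 2 then (i-1).choose (s-1) * (n-i).choose (r-s)
        else (i-1).choose (s-1) * (n-i).choose (r-s)
              - (i-t-1).choose (s-1) * (n-i).choose (r-s)) := by
    intro i hi
    simp only [Finset.mem_Icc] at hi
    rw [Finset.filter_filter]
    rw [show ((binomF n r).filter
        (fun A => (nthEl A s ≤ 2 * s - 1 ∧ (A ∩ Xset r t).Nonempty) ∧ nthEl A s = i))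
        = ((binomF n r).filter (fun A => nthEl A s = i ∧ (A ∩ Xset r t).Nonempty)) from by
      apply Finset.filter_congr
      intro A _
      constructor
      · rintro ⟨⟨_, h2⟩, h3⟩; exact ⟨h3, h2⟩
      · rintro ⟨h1, h2⟩; exact ⟨⟨by omega, h2⟩, h1⟩]
    exact fib_eq n r s t i hr hn hs2 hsr ht1 htr hexc hi.1 hi.2
  rw [Finset.sum_congr rfl hfib]
  by_cases hB : r + 2 ≤ 2 * s - 1
  · -- case 2s-1 ≥ r+2
    have hs4 : 4 ≤ s := by omega
    rw [if_pos hB, show min (r + 1) (2 * s - 1) = r + 1 from by omega]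
    have hsplit1 : Finset.Icc s (2 * s - 1)
        = Finset.Icc s (r + 1) ∪ Finset.Icc (r + 2) (2 * s - 1) := by
      ext x; simp only [Finset.mem_Icc, Finset.mem_union]; omega
    have hdisj : Disjoint (Finset.Icc s (r + 1)) (Finset.Icc (r + 2) (2 * s - 1)) := by
      rw [Finset.disjoint_left]
      intro a ha hb
      simp only [Finset.mem_Icc] at ha hb
      omega
    have hsplit2 : Finset.Icc (r + 2) (2 * s - 1)
        = insert (r + 2) (Finset.Icc (r + 3) (2 * s - 1)) := by
      ext x; simp only [Finset.mem_Icc, Finset.mem_insert]; omega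
    have hnotmem : r + 2 ∉ Finset.Icc (r + 3) (2 * s - 1) := by
      simp only [Finset.mem_Icc]; omega
    rw [hsplit1, Finset.sum_union hdisj, Finset.sum_union hdisj, hsplit2,
      Finset.sum_insert hnotmem, Finset.sum_insert hnotmem]
    have e1 : (∑ i ∈ Finset.Icc s (r + 1),
        (if i ≤ r + 1 then
          (i-1).choose (s-1) * (n-i).choose (r-s) - (i-t).choose (s-1) * (n-i-1).choose (r-s)
        else if i = r + 2 then (i-1).choose (s-1) * (n-i).choose (r-s)
        else (i-1).choose (s-1) * (n-i).choose (r-s)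
              - (i-t-1).choose (s-1) * (n-i).choose (r-s)))
        = (∑ i ∈ Finset.Icc s (r + 1),
            ((i-1).choose (s-1) - (i-t).choose (s-1)) * (n-i).choose (r-s))
          + (if s < r then ∑ i ∈ Finset.Icc s (r + 1),
              (i-t).choose (s-1) * (n-i-1).choose (r-s-1) else 0) := by
      by_cases hsr' : s < r
      · rw [if_pos hsr', ← Finset.sum_add_distrib]
        apply Finset.sum_congr rfl
        intro i hi
        simp only [Finset.mem_Icc] at hi
        rw [if_pos hi.2]
        have hp := Nat.choose_succ_succ (n-i-1) (r-s-1)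
        simp only [Nat.succ_eq_add_one] at hp
        rw [show n-i-1+1 = n-i from by omega, show r-s-1+1 = r-s from by omega] at hp
        have hyx : (i-t).choose (s-1) ≤ (i-1).choose (s-1) :=
          Nat.choose_le_choose _ (by omega)
        rw [hp]
        exact arith1 _ _ _ _ hyx
      · rw [if_neg hsr', add_zero]
        apply Finset.sum_congr rfl
        intro i hi
        simp only [Finset.mem_Icc] at hi
        rw [if_pos hi.2]
        have hrs0 : r - s = 0 := by omega
        simp only [hrs0, Nat.choose_zero_right, mul_one]
    have e2 : (if r + 2 ≤ r + 1 then
          (r+2-1).choose (s-1) * (n-(r+2)).choose (r-s)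
            - (r+2-t).choose (s-1) * (n-(r+2)-1).choose (r-s)
        else if r + 2 = r + 2 then (r+2-1).choose (s-1) * (n-(r+2)).choose (r-s)
        else (r+2-1).choose (s-1) * (n-(r+2)).choose (r-s)
              - (r+2-t-1).choose (s-1) * (n-(r+2)).choose (r-s))
        = ((r+2-1).choose (s-1) - (r+2-t).choose (s-1)) * (n-(r+2)).choose (r-s)
          + (r + 2 - t).choose (s - 1) * (n - r - 2).choose (r - s) := by
      rw [if_neg (by omega), if_pos rfl, show n - (r+2) = n - r - 2 from by omega]
      exact arith2 _ _ _ (Nat.choose_le_choose _ (by omega))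
    have e3 : (∑ i ∈ Finset.Icc (r + 3) (2 * s - 1),
        (if i ≤ r + 1 then
          (i-1).choose (s-1) * (n-i).choose (r-s) - (i-t).choose (s-1) * (n-i-1).choose (r-s)
        else if i = r + 2 then (i-1).choose (s-1) * (n-i).choose (r-s)
        else (i-1).choose (s-1) * (n-i).choose (r-s)
              - (i-t-1).choose (s-1) * (n-i).choose (r-s)))
        = (∑ i ∈ Finset.Icc (r + 3) (2 * s - 1),
            ((i-1).choose (s-1) - (i-t).choose (s-1)) * (n-i).choose (r-s))
          + ∑ i ∈ Finset.Icc (r + 3) (2 * s - 1),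
              (i-t-1).choose (s-2) * (n-i).choose (r-s) := by
      rw [← Finset.sum_add_distrib]
      apply Finset.sum_congr rfl
      intro i hi
      simp only [Finset.mem_Icc] at hi
      rw [if_neg (by omega), if_neg (by omega)]
      have hp := Nat.choose_succ_succ (i-t-1) (s-2)
      simp only [Nat.succ_eq_add_one] at hp
      rw [show i-t-1+1 = i-t from by omega, show s-2+1 = s-1 from by omega] at hp
      have hle : (i-t).choose (s-1) ≤ (i-1).choose (s-1) :=
        Nat.choose_le_choose _ (by omega)
      rw [hp] at hle ⊢
      exact arith3 _ _ _ _ hle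
    omega
  · -- case 2s-1 ≤ r+1
    have hsr' : s < r := by omega
    rw [if_neg hB, if_pos hsr', add_zero,
      show min (r + 1) (2 * s - 1) = 2 * s - 1 from by omega, ← Finset.sum_add_distrib]
    apply Finset.sum_congr rfl
    intro i hi
    simp only [Finset.mem_Icc] at hi
    rw [if_pos (show i ≤ r + 1 by omega)]
    have hp := Nat.choose_succ_succ (n-i-1) (r-s-1)
    simp only [Nat.succ_eq_add_one] at hp
    rw [show n-i-1+1 = n-i from by omega, show r-s-1+1 = r-s from by omega] at hp
    have hyx : (i-t).choose (s-1) ≤ (i-1).choose (s-1) :=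
      Nat.choose_le_choose _ (by omega)
    rw [hp]
    exact arith1 _ _ _ _ hyx
end

section
/- Let t ≥ 1 and let n, r be natural numbers with r ≥ 3 and n ≥ 2r. Define g(n,r,s,t) = Σ_{i=s}^{2s−1} (C(i−1,s−1) − C(i−t,s−1))·C(n−i,r−s). Then g(n,r,s,t) is decreasing in s; that is, g(n,r,s,t) ≥ g(n,r,s+1,t) for all s with 2 ≤ s ≤ r−1. -/
open Finset

/-- The quantity `g(n,r,s,t)` of Lemma `l.decinswt`. -/
def gCount (n r s t : ℕ) : ℕ :=
  ∑ i ∈ Finset.Icc s (2 * s - 1),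
    (Nat.choose (i - 1) (s - 1) - Nat.choose (i - t) (s - 1)) * Nat.choose (n - i) (r - s)


section AuxDecinswt

/-- truncated Pascal: for `s ≥ 2`. -/
lemma pascal_trunc (a q s : ℕ) (hs : 2 ≤ s) :
    (a + 1 - q).choose s = (a - q).choose s + (a - q).choose (s - 1) := by
  obtain ⟨p, rfl⟩ : ∃ p, s = p + 2 := ⟨s - 2, by omega⟩
  have hs1 : p + 2 - 1 = p + 1 := by omega
  rw [hs1]
  rcases le_or_gt q a with h | h
  · rw [show a + 1 - q = (a - q) + 1 by omega, Nat.choose_succ_succ' (a - q) (p + 1)]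
    simp only [show p + 1 + 1 = p + 2 from rfl]
    omega
  · have e : a - q = 0 := by omega
    have e2 : a + 1 - q = 0 ∨ a + 1 - q = 1 := by omega
    rw [e]
    rcases e2 with e2 | e2 <;> rw [e2] <;>
      simp [Nat.choose_eq_zero_of_lt]

lemma choose_base_decin (s q : ℕ) (hq : 1 ≤ q) (hs : 2 ≤ s) :
    (s - q).choose (s - 1) = (s + 1 - q).choose s := by
  rcases Nat.eq_or_lt_of_le hq with h | h
  · subst h
    rw [show s - 1 = s - 1 from rfl, show s + 1 - 1 = s by omega]
    rw [Nat.choose_self, Nat.choose_self]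
  · rw [Nat.choose_eq_zero_of_lt (by omega), Nat.choose_eq_zero_of_lt (by omega)]

/-- summation by parts for the partial Vandermonde sums. -/
lemma lemL_decin (n q s k : ℕ) (hq : 1 ≤ q) (hs : 2 ≤ s) :
    ∀ M, s ≤ M → M ≤ n →
      ∑ i ∈ Finset.Icc s M, (i - q).choose (s - 1) * (n - i).choose (k + 1)
      = (M + 1 - q).choose s * (n - M).choose (k + 1)
        + ∑ i ∈ Finset.Icc (s + 1) M, (i - q).choose s * (n - i).choose k := by
  intro M hM
  induction M, hM using Nat.le_induction with
  | base =>
    intro _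
    rw [Finset.Icc_self, Finset.sum_singleton,
      show Finset.Icc (s + 1) s = ∅ from Finset.Icc_eq_empty (by omega),
      Finset.sum_empty, choose_base_decin s q hq hs]
    omega
  | succ M hsM ih =>
    intro hMn
    rw [Finset.sum_Icc_succ_top (by omega : s ≤ M + 1),
      Finset.sum_Icc_succ_top (by omega : s + 1 ≤ M + 1),
      ih (by omega)]
    have p1 : (n - M).choose (k + 1)
        = (n - (M + 1)).choose (k + 1) + (n - (M + 1)).choose k := by
      rw [show n - M = (n - (M + 1)) + 1 by omega, Nat.choose_succ_succ' (n - (M+1)) k]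
      omega
    have p2 : (M + 1 + 1 - q).choose s
        = (M + 1 - q).choose s + (M + 1 - q).choose (s - 1) :=
      pascal_trunc (M + 1) q s hs
    rw [p1, p2]
    ring

/-- the key shift identity. -/
lemma key_decin (n q s k : ℕ) (hq : 1 ≤ q) (hs : 2 ≤ s) (hn : 2 * s + 2 ≤ n) :
    (∑ i ∈ Finset.Icc s (2 * s - 1), (i - q).choose (s - 1) * (n - i).choose (k + 1))
      + (2 * s - q).choose (s - 1) * (n - (2 * s + 1)).choose k
    = (∑ i ∈ Finset.Icc (s + 1) (2 * s + 1), (i - q).choose s * (n - i).choose k)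
      + (2 * s - q).choose s * (n - (2 * s + 1)).choose (k + 1) := by
  have h1 := lemL_decin n q s k hq hs (2 * s - 1) (by omega) (by omega)
  set M := 2 * s - 1 with hM
  rw [show 2 * s + 1 = M + 2 by omega, show 2 * s - q = M + 1 - q by omega]
  rw [h1,
    Finset.sum_Icc_succ_top (by omega : s + 1 ≤ M + 2),
    Finset.sum_Icc_succ_top (by omega : s + 1 ≤ M + 1)]
  have p1 : (n - M).choose (k + 1)
      = (n - (M + 1)).choose (k + 1) + (n - (M + 1)).choose k := by
    rw [show n - M = (n - (M + 1)) + 1 by omega, Nat.choose_succ_succ' (n - (M+1)) k]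
    omega
  have p2 : (n - (M + 1)).choose (k + 1)
      = (n - (M + 2)).choose (k + 1) + (n - (M + 2)).choose k := by
    rw [show n - (M + 1) = (n - (M + 2)) + 1 by omega, Nat.choose_succ_succ' (n - (M+2)) k]
    omega
  have p3 : (M + 2 - q).choose s
      = (M + 1 - q).choose s + (M + 1 - q).choose (s - 1) :=
    pascal_trunc (M + 1) q s hs
  rw [p1, p2, p3]
  ring

lemma choose_flip_decin (m s : ℕ) (hm : m ≤ 2 * s - 1) (hs : 1 ≤ s) :
    m.choose s ≤ m.choose (s - 1) := by
  have h1 := Nat.choose_succ_right_eq m (s - 1)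
  rw [show s - 1 + 1 = s by omega] at h1
  have h2 : m - (s - 1) ≤ s := by omega
  have h3 : m.choose s * s ≤ m.choose (s - 1) * s := by
    rw [h1]; exact Nat.mul_le_mul_left _ h2
  exact Nat.le_of_mul_le_mul_right h3 (by omega)

lemma choose_up_decin (N k : ℕ) (h : 2 * k + 1 ≤ N) :
    N.choose k ≤ N.choose (k + 1) := by
  have h1 := Nat.choose_succ_right_eq N k
  have h2 : k + 1 ≤ N - k := by omega
  have h3 : N.choose k * (k + 1) ≤ N.choose (k + 1) * (k + 1) := by
    rw [h1]; exact Nat.mul_le_mul_left _ h2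
  exact Nat.le_of_mul_le_mul_right h3 (by omega)

end AuxDecinswt

/-- Lemma `l.decinswt`: for `t ≥ 1`, `r ≥ 3` and `n ≥ 2r`,
`g(n,r,s,t)` is decreasing in `s` for `2 ≤ s ≤ r − 1`. -/
theorem gCount_decreasing (n r t : ℕ) (ht : 1 ≤ t) (hr : 3 ≤ r) (hn : 2 * r ≤ n) :
    ∀ s : ℕ, 2 ≤ s → s ≤ r - 1 → gCount n r (s + 1) t ≤ gCount n r s t := by
  intro s hs2 hsr
  obtain ⟨k, hk⟩ : ∃ k, r - s = k + 1 := ⟨r - s - 1, by omega⟩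
  have hk2 : r - (s + 1) = k := by omega
  have hn2 : 2 * s + 2 ≤ n := by omega
  -- the four sums
  set S1 := ∑ i ∈ Finset.Icc s (2 * s - 1),
      (i - 1).choose (s - 1) * (n - i).choose (k + 1) with hS1
  set St := ∑ i ∈ Finset.Icc s (2 * s - 1),
      (i - t).choose (s - 1) * (n - i).choose (k + 1) with hSt
  set T1 := ∑ i ∈ Finset.Icc (s + 1) (2 * s + 1),
      (i - 1).choose s * (n - i).choose k with hT1
  set Tt := ∑ i ∈ Finset.Icc (s + 1) (2 * s + 1),
      (i - t).choose s * (n - i).choose k with hTt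
  have hg1 : gCount n r s t + St = S1 := by
    simp only [gCount]
    rw [hk, hSt, ← Finset.sum_add_distrib]
    refine Finset.sum_congr rfl fun i _ => ?_
    have hb : (i - t).choose (s - 1) ≤ (i - 1).choose (s - 1) :=
      Nat.choose_le_choose _ (by omega)
    rw [Nat.sub_mul, Nat.sub_add_cancel (Nat.mul_le_mul_right _ hb)]
  have hg2 : gCount n r (s + 1) t + Tt = T1 := by
    simp only [gCount]
    rw [hk2, show s + 1 - 1 = s by omega, show 2 * (s + 1) - 1 = 2 * s + 1 by omega,
      hTt, ← Finset.sum_add_distrib]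
    refine Finset.sum_congr rfl fun i _ => ?_
    have hb : (i - t).choose s ≤ (i - 1).choose s :=
      Nat.choose_le_choose _ (by omega)
    rw [Nat.sub_mul, Nat.sub_add_cancel (Nat.mul_le_mul_right _ hb)]
  have key1 := key_decin n 1 s k le_rfl hs2 hn2
  have keyt := key_decin n t s k ht hs2 hn2
  rw [← hS1, ← hT1] at key1
  rw [← hSt, ← hTt] at keyt
  set P := (n - (2 * s + 1)).choose (k + 1) with hP
  set Q := (n - (2 * s + 1)).choose k with hQ
  have hQP : Q ≤ P := choose_up_decin _ _ (by omega)
  have hAA : (2 * s - 1).choose (s - 1) = (2 * s - 1).choose s := by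
    have h := Nat.choose_symm (show s ≤ 2 * s - 1 by omega)
    rw [show 2 * s - 1 - s = s - 1 by omega] at h
    exact h
  have huv : (2 * s - t).choose s ≤ (2 * s - t).choose (s - 1) :=
    choose_flip_decin _ _ (by omega) (by omega)
  have hvA : (2 * s - t).choose (s - 1) ≤ (2 * s - 1).choose (s - 1) :=
    Nat.choose_le_choose _ (by omega)
  have INEQ : (2 * s - 1).choose (s - 1) * Q + (2 * s - t).choose s * P
      ≤ (2 * s - 1).choose s * P + (2 * s - t).choose (s - 1) * Q := by
    rw [← hAA]
    set A := (2 * s - 1).choose (s - 1)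
    set u := (2 * s - t).choose s
    set v := (2 * s - t).choose (s - 1)
    have h1 : (A:ℤ) * Q + u * P ≤ A * P + v * Q := by
      have e1 : (0:ℤ) ≤ ((A:ℤ) - v) * ((P:ℤ) - Q) := by
        apply mul_nonneg <;> simp only [sub_nonneg] <;> exact_mod_cast ‹_›
      have e2 : (0:ℤ) ≤ ((v:ℤ) - u) * (P:ℤ) := by
        apply mul_nonneg
        · simp only [sub_nonneg]; exact_mod_cast huv
        · positivity
      nlinarith [e1, e2]
    exact_mod_cast h1
  -- combine linearly
  set g1 := gCount n r s t
  set g2 := gCount n r (s + 1) t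
  set X1 := (2 * s - 1).choose (s - 1) * Q
  set Y1 := (2 * s - 1).choose s * P
  set Xt := (2 * s - t).choose (s - 1) * Q
  set Yt := (2 * s - t).choose s * P
  omega
end

section
/- Let t ≥ 1 and let n, r be natural numbers with r ≥ 4 and 3n > 7r (that is, n/r > 7/3). Define D(n,r,s,t) = Σ_{i=s}^{2s−1} (C(i−1,s−1) − C(i−t,s−1))·C(n−i,r−s) + Σ_{i=s}^{min{r+1,2s−1}} C(i−t,s−1)·C(n−i−1,r−s−1). Then D(n,r,s,t) is decreasing in s; that is, D(n,r,s,t) ≥ D(n,r,s+1,t) for all s with 2 ≤ s ≤ r−1. -/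
open Finset

/-- The quantity `D(n,r,s,t)` of Lemma `l.ynofactor`.  (The if-guard encodes the convention
that binomial coefficients with negative lower index `r − s − 1` vanish.) -/
def DCount (n r s t : ℕ) : ℕ :=
  (∑ i ∈ Finset.Icc s (2 * s - 1),
    (Nat.choose (i - 1) (s - 1) - Nat.choose (i - t) (s - 1)) * Nat.choose (n - i) (r - s))
  + (if s < r then
      ∑ i ∈ Finset.Icc s (min (r + 1) (2 * s - 1)),
        Nat.choose (i - t) (s - 1) * Nat.choose (n - i - 1) (r - s - 1)
     else 0)

-- helper 1: binomial decreasing past the middle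
lemma chooseA (M k : ℕ) (h : M ≤ 2*k+1) : Nat.choose M (k+1) ≤ Nat.choose M k := by
  have e := Nat.choose_succ_right_eq M k
  have h2 : M - k ≤ k + 1 := by omega
  have h3 : Nat.choose M (k+1) * (k+1) ≤ Nat.choose M k * (k+1) := by
    rw [e]; exact Nat.mul_le_mul le_rfl h2
  exact Nat.le_of_mul_le_mul_right h3 (Nat.succ_pos k)

-- helper 2: binomial increasing up to the middle
lemma chooseB (M k : ℕ) (h : 2*(k+1) ≤ M+1) : Nat.choose M k ≤ Nat.choose M (k+1) := by
  have e := Nat.choose_succ_right_eq M k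
  have h3 : Nat.choose M k * (k+1) ≤ Nat.choose M (k+1) * (k+1) := by
    calc Nat.choose M k * (k+1) ≤ Nat.choose M k * (M-k) := Nat.mul_le_mul le_rfl (by omega)
    _ = Nat.choose M (k+1) * (k+1) := e.symm
  exact Nat.le_of_mul_le_mul_right h3 (Nat.succ_pos k)

-- helper 3
lemma chooseC (M k : ℕ) (h : 2*(k+1) ≤ M+1) : 2 * Nat.choose M k ≤ Nat.choose (M+1) (k+1) := by
  have e := Nat.add_one_mul_choose_eq M k
  have h1 : (2*(k+1)) * Nat.choose M k ≤ (M+1) * Nat.choose M k := Nat.mul_le_mul h le_rfl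
  have h2 : (2 * Nat.choose M k) * (k+1) ≤ Nat.choose (M+1) (k+1) * (k+1) := by
    calc (2 * Nat.choose M k) * (k+1) = (2*(k+1)) * Nat.choose M k := by ring
    _ ≤ (M+1) * Nat.choose M k := h1
    _ = Nat.choose (M+1) (k+1) * (k+1) := e
  exact Nat.le_of_mul_le_mul_right h2 (Nat.succ_pos k)

-- Pascal with truncated subtraction in the top
lemma pascalT (a j t : ℕ) (ht : 1 ≤ t) :
    Nat.choose (a+1-t) (j+2) = Nat.choose (a-t) (j+2) + Nat.choose (a-t) (j+1) := by
  rcases le_or_gt t a with h | h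
  · rw [show a+1-t = (a-t)+1 by omega]
    rw [show (j+2) = (j+1)+1 by omega]
    rw [Nat.choose_succ_succ]
    simp only [Nat.succ_eq_add_one]
    omega
  · have h0 : a - t = 0 := by omega
    have h1 : a + 1 - t = 0 := by omega
    rw [h0, h1, Nat.choose_eq_zero_of_lt (by omega), Nat.choose_eq_zero_of_lt (by omega)]

-- Key lemma: the generalized sum is decreasing in s
lemma keyH (m q s t : ℕ) (ht : 1 ≤ t) (hs : 2 ≤ s) (hq : s+1 ≤ q) (hm : 2*q ≤ m) :
    ∑ i ∈ Finset.Icc (s+1) (2*(s+1)-1),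
        (Nat.choose (i-1) (s+1-1) - Nat.choose (i-t) (s+1-1)) * Nat.choose (m-i) (q-(s+1))
    ≤ ∑ i ∈ Finset.Icc s (2*s-1),
        (Nat.choose (i-1) (s-1) - Nat.choose (i-t) (s-1)) * Nat.choose (m-i) (q-s) := by
  obtain ⟨k, rfl⟩ : ∃ k, s = k + 2 := ⟨s - 2, by omega⟩
  simp only [show k+2+1 = k+3 by omega, show k+3-1 = k+2 by omega, show k+2-1 = k+1 by omega,
    show 2*(k+3)-1 = 2*k+5 by omega, show 2*(k+2)-1 = 2*k+3 by omega]
  have dagger : ∀ L, k+1 ≤ L → L ≤ 2*k+3 →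
      ∑ i ∈ Finset.Icc (k+2) L,
          (Nat.choose (i-1) (k+1) - Nat.choose (i-t) (k+1)) * Nat.choose (m-i) (q-(k+2))
        = (Nat.choose L (k+2) - Nat.choose (L+1-t) (k+2)) * Nat.choose (m-(L+1)) (q-(k+2))
          + ∑ l ∈ Finset.Icc (k+3) (L+1),
              (Nat.choose (l-1) (k+2) - Nat.choose (l-t) (k+2)) * Nat.choose (m-l) (q-(k+3)) := by
    intro L hL1
    induction L, hL1 using Nat.le_induction with
    | base =>
      intro _
      rw [Finset.Icc_eq_empty (by omega), Finset.Icc_eq_empty (by omega)]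
      simp [Nat.choose_eq_zero_of_lt (show k+1 < k+2 by omega)]
    | succ L hL IH =>
      intro hL2
      have IH' := IH (by omega)
      rw [Finset.sum_Icc_succ_top (show k+2 ≤ L+1 by omega), IH',
        Finset.sum_Icc_succ_top (show k+3 ≤ L+1+1 by omega)]
      rw [show L+1-1 = L by omega, show L+1+1-1 = L+1 by omega]
      have hS : Nat.choose (L+1) (k+2) - Nat.choose (L+1+1-t) (k+2)
          = (Nat.choose L (k+2) - Nat.choose (L+1-t) (k+2))
            + (Nat.choose L (k+1) - Nat.choose (L+1-t) (k+1)) := by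
        have pa := Nat.choose_succ_succ L (k+1)
        have pb := pascalT (L+1) k t ht
        have m1 : Nat.choose (L+1-t) (k+2) ≤ Nat.choose L (k+2) :=
          Nat.choose_le_choose _ (by omega)
        have m2 : Nat.choose (L+1-t) (k+1) ≤ Nat.choose L (k+1) :=
          Nat.choose_le_choose _ (by omega)
        simp only [Nat.succ_eq_add_one, show k+1+1 = k+2 by omega] at pa
        omega
      have hP : Nat.choose (m-(L+1)) (q-(k+2))
          = Nat.choose (m-(L+1+1)) (q-(k+3)) + Nat.choose (m-(L+1+1)) (q-(k+2)) := by
        rw [show m-(L+1) = m-(L+1+1)+1 by omega, show q-(k+2) = q-(k+3)+1 by omega]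
        exact Nat.choose_succ_succ _ _
      rw [hS, hP]
      ring
  have d := dagger (2*k+3) (by omega) le_rfl
  rw [show 2*k+3+1 = 2*k+4 by omega] at d
  rw [show 2*k+5 = 2*k+4+1 by omega, Finset.sum_Icc_succ_top (show k+3 ≤ 2*k+4+1 by omega), d]
  have hfin : (Nat.choose (2*k+4+1-1) (k+2) - Nat.choose (2*k+4+1-t) (k+2))
        * Nat.choose (m-(2*k+4+1)) (q-(k+3))
      ≤ (Nat.choose (2*k+3) (k+2) - Nat.choose (2*k+4-t) (k+2))
        * Nat.choose (m-(2*k+4)) (q-(k+2)) := by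
    rw [show 2*k+4+1-1 = 2*k+4 by omega, show 2*k+4+1-t = 2*k+5-t by omega,
      show m-(2*k+4+1) = m-(2*k+5) by omega]
    have e3 : Nat.choose (2*k+4) (k+2) - Nat.choose (2*k+5-t) (k+2)
        ≤ 2 * (Nat.choose (2*k+3) (k+2) - Nat.choose (2*k+4-t) (k+2)) := by
      have pa := Nat.choose_succ_succ (2*k+3) (k+1)
      have sym := Nat.choose_symm (show k+2 ≤ 2*k+3 by omega)
      rw [show 2*k+3-(k+2) = k+1 by omega] at sym
      have pb := pascalT (2*k+4) k t ht
      rw [show 2*k+4+1-t = 2*k+5-t by omega] at pb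
      have m1 : Nat.choose (2*k+4-t) (k+2) ≤ Nat.choose (2*k+4-t) (k+1) :=
        chooseA (2*k+4-t) (k+1) (by omega)
      have m2 : Nat.choose (2*k+4-t) (k+2) ≤ Nat.choose (2*k+3) (k+2) :=
        Nat.choose_le_choose _ (by omega)
      simp only [Nat.succ_eq_add_one, show k+1+1 = k+2 by omega,
        show 2*k+3+1 = 2*k+4 by omega] at pa
      omega
    have e4 : 2 * Nat.choose (m-(2*k+5)) (q-(k+3)) ≤ Nat.choose (m-(2*k+4)) (q-(k+2)) := by
      have h5 := chooseC (m-(2*k+5)) (q-(k+3)) (by omega)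
      rw [show m-(2*k+5)+1 = m-(2*k+4) by omega, show q-(k+3)+1 = q-(k+2) by omega] at h5
      exact h5
    calc (Nat.choose (2*k+4) (k+2) - Nat.choose (2*k+5-t) (k+2)) * Nat.choose (m-(2*k+5)) (q-(k+3))
        ≤ (2 * (Nat.choose (2*k+3) (k+2) - Nat.choose (2*k+4-t) (k+2)))
            * Nat.choose (m-(2*k+5)) (q-(k+3)) := Nat.mul_le_mul e3 le_rfl
      _ = (Nat.choose (2*k+3) (k+2) - Nat.choose (2*k+4-t) (k+2))
            * (2 * Nat.choose (m-(2*k+5)) (q-(k+3))) := by ring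
      _ ≤ (Nat.choose (2*k+3) (k+2) - Nat.choose (2*k+4-t) (k+2))
            * Nat.choose (m-(2*k+4)) (q-(k+2)) := Nat.mul_le_mul le_rfl e4
  omega

lemma split_level (n r t σ : ℕ) (ht : 1 ≤ t) (hσ : 1 ≤ σ) (hr : σ+1 ≤ r) (hn : 2*σ ≤ n) :
    ((∑ i ∈ Finset.Icc σ (2*σ-1),
        (Nat.choose (i-1) (σ-1) - Nat.choose (i-t) (σ-1)) * Nat.choose (n-i) (r-σ))
      + ∑ i ∈ Finset.Icc σ (2*σ-1),
          Nat.choose (i-t) (σ-1) * Nat.choose (n-i-1) (r-σ-1))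
    = (∑ i ∈ Finset.Icc σ (2*σ-1),
        Nat.choose (i-1) (σ-1) * Nat.choose (n-i-1) (r-σ-1))
      + ∑ i ∈ Finset.Icc σ (2*σ-1),
          (Nat.choose (i-1) (σ-1) - Nat.choose (i-t) (σ-1)) * Nat.choose (n-i-1) (r-σ) := by
  rw [← Finset.sum_add_distrib, ← Finset.sum_add_distrib]
  refine Finset.sum_congr rfl fun i hi => ?_
  simp only [Finset.mem_Icc] at hi
  have hP : Nat.choose (n-i) (r-σ)
      = Nat.choose (n-i-1) (r-σ-1) + Nat.choose (n-i-1) (r-σ) := by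
    rw [show n-i = (n-i-1)+1 by omega, show r-σ = (r-σ-1)+1 by omega]
    exact Nat.choose_succ_succ _ _
  have he : Nat.choose (i-t) (σ-1) ≤ Nat.choose (i-1) (σ-1) :=
    Nat.choose_le_choose _ (by omega)
  obtain ⟨dd, hd⟩ := Nat.le.dest he
  have hw : Nat.choose (i-1) (σ-1) - Nat.choose (i-t) (σ-1) = dd := by omega
  rw [hP, hw, ← hd]
  ring

/-- Lemma `l.ynofactor`: for `t ≥ 1`, `r ≥ 4` and `n/r > 7/3`
(i.e. `3n > 7r`), `D(n,r,s,t)` is decreasing in `s` for `2 ≤ s ≤ r − 1`. -/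
theorem DCount_decreasing (n r t : ℕ) (ht : 1 ≤ t) (hr : 4 ≤ r) (hn : 7 * r < 3 * n) :
    ∀ s : ℕ, 2 ≤ s → s ≤ r - 1 → DCount n r (s + 1) t ≤ DCount n r s t := by
  intro s hs2 hsr
  have hrs : s + 1 ≤ r := by omega
  have hn2 : 2 * r + 2 ≤ n := by omega
  unfold DCount
  rcases eq_or_lt_of_le hrs with heq | hlt
  · -- s + 1 = r
    rw [if_neg (by omega), if_pos (by omega)]
    have hk := keyH n r s t ht hs2 (by omega) (by omega)
    omega
  · -- s + 1 < r
    rw [if_pos (by omega), if_pos (by omega)]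
    by_cases hreg : 2 * s ≤ r + 2
    · -- small regime : 2s - 1 ≤ r + 1
      rw [min_eq_right (show 2*s-1 ≤ r+1 by omega)]
      have sub1 : ∑ i ∈ Finset.Icc (s+1) (min (r+1) (2*(s+1)-1)),
            Nat.choose (i-t) (s+1-1) * Nat.choose (n-i-1) (r-(s+1)-1)
          ≤ ∑ i ∈ Finset.Icc (s+1) (2*(s+1)-1),
            Nat.choose (i-t) (s+1-1) * Nat.choose (n-i-1) (r-(s+1)-1) :=
        Finset.sum_le_sum_of_subset (Finset.Icc_subset_Icc_right (min_le_right _ _))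
      have sp1 := split_level n r t (s+1) ht (by omega) (by omega) (by omega)
      have sp0 := split_level n r t s ht (by omega) (by omega) (by omega)
      have hU : ∑ i ∈ Finset.Icc (s+1) (2*(s+1)-1),
            Nat.choose (i-1) (s+1-1) * Nat.choose (n-i-1) (r-(s+1)-1)
          ≤ ∑ i ∈ Finset.Icc s (2*s-1),
            Nat.choose (i-1) (s-1) * Nat.choose (n-i-1) (r-s-1) := by
        have h := keyH (n-1) (r-1) s (2*s+2) (by omega) hs2 (by omega) (by omega)
        have cL : ∑ i ∈ Finset.Icc (s+1) (2*(s+1)-1),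
              (Nat.choose (i-1) (s+1-1) - Nat.choose (i-(2*s+2)) (s+1-1))
                * Nat.choose (n-1-i) (r-1-(s+1))
            = ∑ i ∈ Finset.Icc (s+1) (2*(s+1)-1),
              Nat.choose (i-1) (s+1-1) * Nat.choose (n-i-1) (r-(s+1)-1) := by
          refine Finset.sum_congr rfl fun i hi => ?_
          simp only [Finset.mem_Icc] at hi
          rw [show i-(2*s+2) = 0 by omega,
            Nat.choose_eq_zero_of_lt (show 0 < s+1-1 by omega), Nat.sub_zero,
            show n-1-i = n-i-1 by omega, show r-1-(s+1) = r-(s+1)-1 by omega]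
        have cR : ∑ i ∈ Finset.Icc s (2*s-1),
              (Nat.choose (i-1) (s-1) - Nat.choose (i-(2*s+2)) (s-1))
                * Nat.choose (n-1-i) (r-1-s)
            = ∑ i ∈ Finset.Icc s (2*s-1),
              Nat.choose (i-1) (s-1) * Nat.choose (n-i-1) (r-s-1) := by
          refine Finset.sum_congr rfl fun i hi => ?_
          simp only [Finset.mem_Icc] at hi
          rw [show i-(2*s+2) = 0 by omega,
            Nat.choose_eq_zero_of_lt (show 0 < s-1 by omega), Nat.sub_zero,
            show n-1-i = n-i-1 by omega, show r-1-s = r-s-1 by omega]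
        rw [cL, cR] at h
        exact h
      have hV : ∑ i ∈ Finset.Icc (s+1) (2*(s+1)-1),
            (Nat.choose (i-1) (s+1-1) - Nat.choose (i-t) (s+1-1))
              * Nat.choose (n-i-1) (r-(s+1))
          ≤ ∑ i ∈ Finset.Icc s (2*s-1),
            (Nat.choose (i-1) (s-1) - Nat.choose (i-t) (s-1))
              * Nat.choose (n-i-1) (r-s) := by
        have h := keyH (n-1) r s t ht hs2 (by omega) (by omega)
        have cL : ∑ i ∈ Finset.Icc (s+1) (2*(s+1)-1),
              (Nat.choose (i-1) (s+1-1) - Nat.choose (i-t) (s+1-1))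
                * Nat.choose (n-1-i) (r-(s+1))
            = ∑ i ∈ Finset.Icc (s+1) (2*(s+1)-1),
              (Nat.choose (i-1) (s+1-1) - Nat.choose (i-t) (s+1-1))
                * Nat.choose (n-i-1) (r-(s+1)) := by
          refine Finset.sum_congr rfl fun i hi => ?_
          simp only [Finset.mem_Icc] at hi
          rw [show n-1-i = n-i-1 by omega]
        have cR : ∑ i ∈ Finset.Icc s (2*s-1),
              (Nat.choose (i-1) (s-1) - Nat.choose (i-t) (s-1))
                * Nat.choose (n-1-i) (r-s)
            = ∑ i ∈ Finset.Icc s (2*s-1),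
              (Nat.choose (i-1) (s-1) - Nat.choose (i-t) (s-1))
                * Nat.choose (n-i-1) (r-s) := by
          refine Finset.sum_congr rfl fun i hi => ?_
          simp only [Finset.mem_Icc] at hi
          rw [show n-1-i = n-i-1 by omega]
        rw [cL, cR] at h
        exact h
      omega
    · -- large regime : 2s ≥ r + 3
      rw [min_eq_left (show r+1 ≤ 2*s-1 by omega),
        min_eq_left (show r+1 ≤ 2*(s+1)-1 by omega)]
      have hA := keyH n r s t ht hs2 (by omega) (by omega)
      have hB : ∑ i ∈ Finset.Icc (s+1) (r+1),
            Nat.choose (i-t) (s+1-1) * Nat.choose (n-i-1) (r-(s+1)-1)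
          ≤ ∑ i ∈ Finset.Icc s (r+1),
            Nat.choose (i-t) (s-1) * Nat.choose (n-i-1) (r-s-1) := by
        calc ∑ i ∈ Finset.Icc (s+1) (r+1),
              Nat.choose (i-t) (s+1-1) * Nat.choose (n-i-1) (r-(s+1)-1)
            ≤ ∑ i ∈ Finset.Icc (s+1) (r+1),
              Nat.choose (i-t) (s-1) * Nat.choose (n-i-1) (r-s-1) := by
              refine Finset.sum_le_sum fun i hi => ?_
              simp only [Finset.mem_Icc] at hi
              refine Nat.mul_le_mul ?_ ?_
              · have h1 := chooseA (i-t) (s-1) (by omega)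
                rw [show s-1+1 = s by omega] at h1
                rw [show s+1-1 = s by omega]
                exact h1
              · have h2 := chooseB (n-i-1) (r-(s+1)-1) (by omega)
                rw [show r-(s+1)-1+1 = r-s-1 by omega] at h2
                exact h2
          _ ≤ ∑ i ∈ Finset.Icc s (r+1),
              Nat.choose (i-t) (s-1) * Nat.choose (n-i-1) (r-s-1) :=
              Finset.sum_le_sum_of_subset (Finset.Icc_subset_Icc_left (by omega))
      omega
end
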